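/- arXiv:1607.01439 — 8 statements merged into one kernel-verified Lean document; each statement's English description precedes it below -/
import Mathlib

section
/- For all real numbers f, g, μ, R, S, a, b, c, the following algebraic identity holds: R·a·[ (R f³/3)·a + Sμ(f³/3 + f²g/2)·b − μ(f²/2)·c ] + Sμ·b·[ (R f³/3)·a + Sμ(f³/3 + f²g/2)·b − μ(f²/2)·c + (R f²g/2)·a + S(g³/3 + μ(f²g/2 + f g²))·b − (μ f g + g²/2)·c ] − μ·c·[ (R f²/2)·a + S(g²/2 + μ(f²/2 + f g))·b − (μ f + g)·c ] = f·( f·(R a + S μ b)/√3 + (√3/2)·μ·(S g b − c) )² + (μ²/4)·f·(S g b − c)² + g μ·( (S/√3)·g·b − (√3/2)·c )² + (g μ/4)·c². In particular, if f ≥ 0, g ≥ 0 and μ ≥ 0, the left-hand side is nonnegative. -/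
/-! Both squares on the right have the shape `(x / √3 + √3 / 2 * y) ^ 2`, whose cross term is
free of `√3`; expanding them and substituting `√3 ^ 2 = 3` leaves a polynomial identity. -/

theorem div_add_half_mul_sq {K : Type*} [Field K] [CharZero K] {r : K} (hr : r ≠ 0) (x y : K) :
    (x / r + r / 2 * y) ^ 2 = x ^ 2 / r ^ 2 + x * y + r ^ 2 / 4 * y ^ 2 := by
  field_simp
  ring

/-- Pointwise sum-of-squares identity underlying the dissipation of the energy
functional for the two-phase thin film system with insoluble surfactant
(Lemma 2.1 of the paper). Here `a` stands for `∂ₓᵏf`, `b` for `∂ₓᵏ(f+g)`,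
`c` for `∂ₓσ(Γ)`, `R`, `S` for the constants `Rₖ`, `Sₖ`, and `μ` for the
viscosity ratio. In particular, if `f ≥ 0`, `g ≥ 0`, `μ ≥ 0`, the left-hand
side is nonnegative. -/
theorem energy_dissipation_sos_identity (f g μ R S a b c : ℝ) :
    (R * a * (R * f ^ 3 / 3 * a + S * μ * (f ^ 3 / 3 + f ^ 2 * g / 2) * b
        - μ * (f ^ 2 / 2) * c)
      + S * μ * b * (R * f ^ 3 / 3 * a + S * μ * (f ^ 3 / 3 + f ^ 2 * g / 2) * b
        - μ * (f ^ 2 / 2) * c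
        + R * f ^ 2 * g / 2 * a + S * (g ^ 3 / 3 + μ * (f ^ 2 * g / 2 + f * g ^ 2)) * b
        - (μ * f * g + g ^ 2 / 2) * c)
      - μ * c * (R * f ^ 2 / 2 * a + S * (g ^ 2 / 2 + μ * (f ^ 2 / 2 + f * g)) * b
        - (μ * f + g) * c)
    = f * (f * (R * a + S * μ * b) / Real.sqrt 3
          + Real.sqrt 3 / 2 * μ * (S * g * b - c)) ^ 2
      + μ ^ 2 / 4 * f * (S * g * b - c) ^ 2
      + g * μ * (S / Real.sqrt 3 * g * b - Real.sqrt 3 / 2 * c) ^ 2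
      + g * μ / 4 * c ^ 2)
    ∧ (0 ≤ f → 0 ≤ g → 0 ≤ μ →
      0 ≤ R * a * (R * f ^ 3 / 3 * a + S * μ * (f ^ 3 / 3 + f ^ 2 * g / 2) * b
          - μ * (f ^ 2 / 2) * c)
        + S * μ * b * (R * f ^ 3 / 3 * a + S * μ * (f ^ 3 / 3 + f ^ 2 * g / 2) * b
          - μ * (f ^ 2 / 2) * c
          + R * f ^ 2 * g / 2 * a + S * (g ^ 3 / 3 + μ * (f ^ 2 * g / 2 + f * g ^ 2)) * b
          - (μ * f * g + g ^ 2 / 2) * c)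
        - μ * c * (R * f ^ 2 / 2 * a + S * (g ^ 2 / 2 + μ * (f ^ 2 / 2 + f * g)) * b
          - (μ * f + g) * c)) := by
  have hsqrt3 : Real.sqrt 3 ≠ 0 := by positivity
  refine (fun hsos => ⟨hsos, fun hf hg hμ => by rw [hsos]; positivity⟩) ?_
  rw [mul_assoc (Real.sqrt 3 / 2), div_add_half_mul_sq hsqrt3,
    show S / Real.sqrt 3 * g * b - Real.sqrt 3 / 2 * c
      = S * g * b / Real.sqrt 3 + Real.sqrt 3 / 2 * -c by ring,
    div_add_half_mul_sq hsqrt3, Real.sq_sqrt zero_le_three]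
  ring
end

section
/- Let L > 0, μ > 0, D > 0 and R₁, S₁ > 0, and let σ ∈ C²(ℝ) be strictly decreasing. Suppose f, g, Γ ∈ C²([0,L]) are strictly positive functions which form a steady state of the gravity-driven system (G), i.e. the x-derivatives of the three fluxes ∂ₓ[f((R₁f²/3)∂ₓf + S₁μ(f²/3 + fg/2)∂ₓ(f+g) − μ(f/2)∂ₓ(σ∘Γ))], ∂ₓ[g((R₁f²/2)∂ₓf + S₁(g²/3 + μ(f²/2 + fg))∂ₓ(f+g) − (μf + g/2)∂ₓ(σ∘Γ))] and ∂ₓ[Γ((R₁f²/2)∂ₓf + S₁(g²/2 + μ(f²/2 + fg))∂ₓ(f+g) − (μf + g)∂ₓ(σ∘Γ)) + D∂ₓΓ] all vanish identically on (0,L), and ∂ₓf = ∂ₓg = ∂ₓΓ = 0 at x = 0 and x = L. Then f, g and Γ are constant on [0,L]. -/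
open Set

/-!
Each flux has zero derivative on `(0, L)`. Written with one-sided derivatives it extends
continuously to `[0, L]`, so it is constant there, and the Neumann conditions make the constant
zero. At every point the three vanishing fluxes are then a linear system in `(f', g', Γ')`:
eliminating `f'` between the first two and substituting into the third leaves
`(D K - σ'(Γ) Γ N) Γ' = 0` with `K, N > 0`, and `σ' ≤ 0` forces `Γ' = 0`, hence `f' + g' = 0`
and `f' = 0`.
-/

theorem constant_of_deriv_zero_of_continuousOn {Φ : ℝ → ℝ} {a b : ℝ}
    (hc : ContinuousOn Φ (Icc a b)) (hd : DifferentiableOn ℝ Φ (Ioo a b))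
    (h : ∀ x ∈ Ioo a b, deriv Φ x = 0) : ∀ x ∈ Icc a b, Φ x = Φ a := by
  intro x hx
  rcases hx.1.eq_or_lt with rfl | hax
  · rfl
  obtain ⟨c, hc, hslope⟩ := exists_deriv_eq_slope Φ hax (hc.mono (Icc_subset_Icc_right hx.2))
    (hd.mono (Ioo_subset_Ioo_right hx.2))
  rw [h c ⟨hc.1, hc.2.trans_le hx.2⟩, eq_comm, div_eq_zero_iff, sub_eq_zero, sub_eq_zero]
    at hslope
  exact hslope.resolve_right hax.ne'

theorem flux_eq_zero_of_neumann {a b D : ℝ} (hab : a < b) {u v Γ σ w p q r : ℝ → ℝ}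
    (hu : ContDiffOn ℝ 2 u (Icc a b)) (hv : ContDiffOn ℝ 2 v (Icc a b))
    (hΓ : ContDiffOn ℝ 2 Γ (Icc a b)) (hσ : ContDiff ℝ 2 σ)
    (hu₀ : derivWithin u (Icc a b) a = 0) (hv₀ : derivWithin v (Icc a b) a = 0)
    (hΓ₀ : derivWithin Γ (Icc a b) a = 0)
    (hflux : ∀ x ∈ Ioo a b, deriv (fun y => w y * (p y * deriv u y
        + q y * deriv (fun ξ => u ξ + v ξ) y - r y * deriv (fun ξ => σ (Γ ξ)) y)
        + D * deriv Γ y) x = 0)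
    (hw : ContDiffOn ℝ 1 w (Icc a b) := by fun_prop)
    (hp : ContDiffOn ℝ 1 p (Icc a b) := by fun_prop)
    (hq : ContDiffOn ℝ 1 q (Icc a b) := by fun_prop)
    (hr : ContDiffOn ℝ 1 r (Icc a b) := by fun_prop) :
    ∀ x ∈ Icc a b, w x * (p x * derivWithin u (Icc a b) x
        + q x * (derivWithin u (Icc a b) x + derivWithin v (Icc a b) x)
        - r x * (deriv σ (Γ x) * derivWithin Γ (Icc a b) x))
        + D * derivWithin Γ (Icc a b) x = 0 := by
  set s := Icc a b
  have hs : UniqueDiffOn ℝ s := uniqueDiffOn_Icc hab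
  have hu' := hu.derivWithin hs one_add_one_eq_two.le
  have hv' := hv.derivWithin hs one_add_one_eq_two.le
  have hΓ' := hΓ.derivWithin hs one_add_one_eq_two.le
  have hΓ₁ : ContDiffOn ℝ 1 Γ s := hΓ.of_le one_le_two
  have hσ' : ContDiff ℝ 1 (deriv σ) := hσ.deriv'
  -- The flux with `deriv`, which is junk at the endpoints, replaced by `derivWithin`.
  set Ψ := fun y => w y * (p y * derivWithin u s y + q y * (derivWithin u s y + derivWithin v s y)
    - r y * (deriv σ (Γ y) * derivWithin Γ s y)) + D * derivWithin Γ s y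
  have hΨ : ContDiffOn ℝ 1 Ψ s := by fun_prop
  have hΦΨ : EqOn (fun y => w y * (p y * deriv u y + q y * deriv (fun ξ => u ξ + v ξ) y
      - r y * deriv (fun ξ => σ (Γ ξ)) y) + D * deriv Γ y) Ψ (Ioo a b) := by
    intro y hy
    have hn : s ∈ nhds y := Icc_mem_nhds hy.1 hy.2
    have hud := (hu.differentiableOn two_ne_zero y (Ioo_subset_Icc_self hy)).differentiableAt hn
    have hvd := (hv.differentiableOn two_ne_zero y (Ioo_subset_Icc_self hy)).differentiableAt hn
    have hΓd := (hΓ.differentiableOn two_ne_zero y (Ioo_subset_Icc_self hy)).differentiableAt hn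
    have hσd := (hσ.differentiable two_ne_zero) (Γ y)
    have hσΓ : deriv (fun ξ => σ (Γ ξ)) y = deriv σ (Γ y) * deriv Γ y := deriv_comp y hσd hΓd
    simp only [Ψ, derivWithin_of_mem_nhds hn, deriv_fun_add hud hvd, hσΓ]
  have hΨa : Ψ a = 0 := by simp only [Ψ, hu₀, hv₀, hΓ₀]; ring
  intro x hx
  exact (constant_of_deriv_zero_of_continuousOn hΨ.continuousOn
    ((hΨ.differentiableOn one_ne_zero).mono Ioo_subset_Icc_self)
    (fun y hy => (hΦΨ.deriv isOpen_Ioo hy).symm.trans (hflux y hy)) x hx).trans hΨa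

theorem derivs_eq_zero_of_fluxes_eq_zero {μ D R₁ S₁ F G Θ s A B C : ℝ} (hμ : 0 ≤ μ) (hD : 0 < D)
    (hR₁ : 0 < R₁) (hS₁ : 0 < S₁) (hF : 0 < F) (hG : 0 < G) (hΘ : 0 ≤ Θ) (hs : s ≤ 0)
    (h₁ : F * (R₁ * F ^ 2 / 3 * A + S₁ * μ * (F ^ 2 / 3 + F * G / 2) * (A + B)
      - μ * (F / 2) * (s * C)) = 0)
    (h₂ : G * (R₁ * F ^ 2 / 2 * A + S₁ * (G ^ 2 / 3 + μ * (F ^ 2 / 2 + F * G)) * (A + B)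
      - (μ * F + G / 2) * (s * C)) = 0)
    (h₃ : Θ * (R₁ * F ^ 2 / 2 * A + S₁ * (G ^ 2 / 2 + μ * (F ^ 2 / 2 + F * G)) * (A + B)
      - (μ * F + G) * (s * C)) + D * C = 0) :
    A = 0 ∧ B = 0 ∧ C = 0 := by
  have e₁ := (mul_eq_zero.1 h₁).resolve_left hF.ne'
  have e₂ := (mul_eq_zero.1 h₂).resolve_left hG.ne'
  set K := R₁ * S₁ * F ^ 2 * (G ^ 2 / 9 + μ * F * G / 12)
  have hK : 0 < K := by positivity
  have hAB : K * (A + B) = R₁ * F ^ 2 * (μ * F / 12 + G / 6) * (s * C) := by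
    linear_combination (R₁ * F ^ 2 / 3) * e₂ - (R₁ * F ^ 2 / 2) * e₁
  have hC : (D * K - s * Θ * (R₁ * S₁ * F ^ 2 * G ^ 2 * (μ * F + G) / 36)) * C = 0 := by
    linear_combination K * h₃ - K * Θ * e₂ - (Θ * S₁ * G ^ 2 / 6) * hAB
  have hsΘ : s * Θ * (R₁ * S₁ * F ^ 2 * G ^ 2 * (μ * F + G) / 36) ≤ 0 :=
    mul_nonpos_of_nonpos_of_nonneg (mul_nonpos_of_nonpos_of_nonneg hs hΘ) (by positivity)
  have hC0 : C = 0 := (mul_eq_zero.1 hC).resolve_left (by linarith [mul_pos hD hK])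
  have hAB0 : A + B = 0 :=
    (mul_eq_zero.1 (hAB.trans (by rw [hC0]; ring))).resolve_left hK.ne'
  have hA : R₁ * F ^ 2 / 3 * A = 0 := by
    linear_combination e₁ - S₁ * μ * (F ^ 2 / 3 + F * G / 2) * hAB0 + μ * (F / 2) * s * hC0
  have hA0 : A = 0 := (mul_eq_zero.1 hA).resolve_left (by positivity)
  exact ⟨hA0, by linear_combination hAB0 - hA0, hC0⟩

/-- Corollary 3.2 of the paper: under assumption G1 (`R₁, S₁ > 0`) and for a strictly
decreasing surface tension `σ`, the only positive steady states of the gravity-driven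
two-phase thin film system with insoluble surfactant (with Neumann boundary
conditions) are constants. -/
theorem gravity_steady_states_constant
    (L : ℝ) (hL : 0 < L)
    (μ D R₁ S₁ : ℝ) (hμ : 0 < μ) (hD : 0 < D) (hR₁ : 0 < R₁) (hS₁ : 0 < S₁)
    (σ : ℝ → ℝ) (hσ : ContDiff ℝ 2 σ) (hσdec : StrictAnti σ)
    (f g Γ : ℝ → ℝ)
    (hf : ContDiffOn ℝ 2 f (Icc 0 L))
    (hg : ContDiffOn ℝ 2 g (Icc 0 L))
    (hΓ : ContDiffOn ℝ 2 Γ (Icc 0 L))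
    (hfpos : ∀ x ∈ Icc (0 : ℝ) L, 0 < f x)
    (hgpos : ∀ x ∈ Icc (0 : ℝ) L, 0 < g x)
    (hΓpos : ∀ x ∈ Icc (0 : ℝ) L, 0 < Γ x)
    -- the x-derivatives of the three fluxes vanish identically on (0,L)
    (hflux_f : ∀ x ∈ Ioo (0 : ℝ) L,
      deriv (fun y => f y *
        (R₁ * (f y) ^ 2 / 3 * deriv f y
         + S₁ * μ * ((f y) ^ 2 / 3 + f y * g y / 2) * deriv (fun ξ => f ξ + g ξ) y
         - μ * (f y / 2) * deriv (fun ξ => σ (Γ ξ)) y)) x = 0)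
    (hflux_g : ∀ x ∈ Ioo (0 : ℝ) L,
      deriv (fun y => g y *
        (R₁ * (f y) ^ 2 / 2 * deriv f y
         + S₁ * ((g y) ^ 2 / 3 + μ * ((f y) ^ 2 / 2 + f y * g y))
            * deriv (fun ξ => f ξ + g ξ) y
         - (μ * f y + g y / 2) * deriv (fun ξ => σ (Γ ξ)) y)) x = 0)
    (hflux_Γ : ∀ x ∈ Ioo (0 : ℝ) L,
      deriv (fun y => Γ y *
        (R₁ * (f y) ^ 2 / 2 * deriv f y
         + S₁ * ((g y) ^ 2 / 2 + μ * ((f y) ^ 2 / 2 + f y * g y))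
            * deriv (fun ξ => f ξ + g ξ) y
         - (μ * f y + g y) * deriv (fun ξ => σ (Γ ξ)) y)
        + D * deriv Γ y) x = 0)
    -- Neumann boundary conditions at x = 0 and x = L
    (hbc : derivWithin f (Icc 0 L) 0 = 0 ∧ derivWithin f (Icc 0 L) L = 0 ∧
      derivWithin g (Icc 0 L) 0 = 0 ∧ derivWithin g (Icc 0 L) L = 0 ∧
      derivWithin Γ (Icc 0 L) 0 = 0 ∧ derivWithin Γ (Icc 0 L) L = 0) :
    ∀ x ∈ Icc (0 : ℝ) L, f x = f 0 ∧ g x = g 0 ∧ Γ x = Γ 0 := by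
  obtain ⟨hf₀, -, hg₀, -, hΓ₀, -⟩ := hbc
  -- Picked up by the `fun_prop` side conditions of `flux_eq_zero_of_neumann`.
  have hf₁ : ContDiffOn ℝ 1 f (Icc 0 L) := hf.of_le one_le_two
  have hg₁ : ContDiffOn ℝ 1 g (Icc 0 L) := hg.of_le one_le_two
  have hΓ₁ : ContDiffOn ℝ 1 Γ (Icc 0 L) := hΓ.of_le one_le_two
  have h₁ := flux_eq_zero_of_neumann (D := 0) hL hf hg hΓ hσ hf₀ hg₀ hΓ₀
    (fun x hx => by simpa only [zero_mul, add_zero] using hflux_f x hx)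
  have h₂ := flux_eq_zero_of_neumann (D := 0) hL hf hg hΓ hσ hf₀ hg₀ hΓ₀
    (fun x hx => by simpa only [zero_mul, add_zero] using hflux_g x hx)
  have h₃ := flux_eq_zero_of_neumann hL hf hg hΓ hσ hf₀ hg₀ hΓ₀ hflux_Γ
  have hderiv : ∀ x ∈ Icc 0 L, derivWithin f (Icc 0 L) x = 0 ∧ derivWithin g (Icc 0 L) x = 0
      ∧ derivWithin Γ (Icc 0 L) x = 0 := fun x hx =>
    derivs_eq_zero_of_fluxes_eq_zero hμ.le hD hR₁ hS₁ (hfpos x hx) (hgpos x hx) (hΓpos x hx).le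
      hσdec.antitone.deriv_nonpos (by linear_combination h₁ x hx) (by linear_combination h₂ x hx)
      (h₃ x hx)
  intro x hx
  exact ⟨constant_of_derivWithin_zero (hf.differentiableOn two_ne_zero)
      (fun y hy => (hderiv y (Ico_subset_Icc_self hy)).1) x hx,
    constant_of_derivWithin_zero (hg.differentiableOn two_ne_zero)
      (fun y hy => (hderiv y (Ico_subset_Icc_self hy)).2.1) x hx,
    constant_of_derivWithin_zero (hΓ.differentiableOn two_ne_zero)
      (fun y hy => (hderiv y (Ico_subset_Icc_self hy)).2.2) x hx⟩
end

section
/- Let L > 0, μ > 0, D > 0 and σ₁ᶜ, σ₂ᶜ > 0, and set R₃ := −σ₁ᶜ, S₃ := −σ₂ᶜ. Let σ ∈ C²(ℝ) be strictly decreasing. Suppose f, g ∈ C⁴([0,L]) and Γ ∈ C²([0,L]) are strictly positive functions which form a steady state of the capillary-driven system (C), i.e. the x-derivatives of the three fluxes ∂ₓ[f((R₃f²/3)∂ₓ³f + S₃μ(f²/3 + fg/2)∂ₓ³(f+g) − μ(f/2)∂ₓ(σ∘Γ))], ∂ₓ[g((R₃f²/2)∂ₓ³f + S₃(g²/3 +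 μ(f²/2 + fg))∂ₓ³(f+g) − (μf + g/2)∂ₓ(σ∘Γ))] and ∂ₓ[Γ((R₃f²/2)∂ₓ³f + S₃(g²/2 + μ(f²/2 + fg))∂ₓ³(f+g) − (μf + g)∂ₓ(σ∘Γ)) + D∂ₓΓ] all vanish identically on (0,L), and ∂ₓf = ∂ₓg = ∂ₓΓ = 0 as well as ∂ₓ³f = ∂ₓ³g = 0 at x = 0 and x = L. Then f, g and Γ are constant on [0,L]. -/
/-!
Each of the three fluxes has zero derivative on `(0, L)`, is continuous up to the boundary, and
vanishes at `x = 0` by the boundary conditions, so it vanishes on `[0, L]`. After dividing by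
`f, g > 0`, the three vanishing fluxes form a homogeneous linear system in `∂ₓ³f`, `∂ₓ³(f + g)` and
`∂ₓΓ` (using `∂ₓ(σ ∘ Γ) = σ'(Γ) ∂ₓΓ`), and since `σ' ≤ 0`, `Γ ≥ 0` and `D > 0` its only solution is
zero. So `Γ` is constant, while `f` and `g` have vanishing third derivative: their second derivative
is a constant `c`, and `∂ₓf(L) - ∂ₓf(0) = c L` forces `c = 0`, hence `∂ₓf = 0`.
-/

open Set Filter Topology

section IteratedDeriv

variable {𝕜 F : Type*} [NontriviallyNormedField 𝕜] [NormedAddCommGroup F] [NormedSpace 𝕜 F]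
  {f : 𝕜 → F} {s : Set 𝕜} {x : 𝕜}

theorem iteratedDerivWithin_of_mem_nhds (hs : s ∈ 𝓝 x) (n : ℕ) :
    iteratedDerivWithin n f s x = iteratedDeriv n f x := by
  rw [← iteratedDerivWithin_univ, iteratedDerivWithin_eq_iteratedFDerivWithin,
    iteratedDerivWithin_eq_iteratedFDerivWithin,
    iteratedFDerivWithin_congr_set (eventuallyEq_univ.2 hs)]

theorem ContDiffOn.hasDerivAt_iteratedDerivWithin {n : WithTop ℕ∞} {k : ℕ}
    (hf : ContDiffOn 𝕜 n f s) (hk : k < n) (hs : UniqueDiffOn 𝕜 s) (hx : s ∈ 𝓝 x) :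
    HasDerivAt (iteratedDerivWithin k f s) (iteratedDerivWithin (k + 1) f s x) x := by
  rw [iteratedDerivWithin_succ, derivWithin_of_mem_nhds hx]
  exact ((hf.differentiableOn_iteratedDerivWithin hk hs).differentiableAt hx).hasDerivAt

theorem derivWithin_comp_eq_deriv_mul {σ Γ : 𝕜 → 𝕜} (hσ : DifferentiableAt 𝕜 σ (Γ x))
    (hΓ : DifferentiableWithinAt 𝕜 Γ s x) :
    derivWithin (fun ξ => σ (Γ ξ)) s x = deriv σ (Γ x) * derivWithin Γ s x := by
  rw [← derivWithin_univ, ← derivWithin_comp x hσ.differentiableWithinAt hΓ (mapsTo_univ _ _)]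
  rfl

end IteratedDeriv

section Interval

variable {a b c : ℝ}

theorem eq_add_mul_sub_of_hasDerivAt {h : ℝ → ℝ} (hc : ContinuousOn h (Icc a b))
    (hd : ∀ x ∈ Ioo a b, HasDerivAt h c x) : ∀ x ∈ Icc a b, h x = h a + c * (x - a) := by
  intro x hx
  rcases hx.1.eq_or_lt with rfl | hax
  · ring
  obtain ⟨y, -, hslope⟩ := exists_hasDerivAt_eq_slope h (fun _ => c) hax
    (hc.mono (Icc_subset_Icc_right hx.2)) fun y hy => hd y ⟨hy.1, hy.2.trans_le hx.2⟩
  rw [eq_div_iff (sub_ne_zero.2 hax.ne')] at hslope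
  linarith

theorem eq_zero_of_eqOn_of_deriv_eq_zero {Φ Ψ : ℝ → ℝ} (hc : ContinuousOn Φ (Icc a b))
    (hd : ∀ x ∈ Ioo a b, DifferentiableAt ℝ Φ x) (hΦΨ : EqOn Φ Ψ (Ioo a b))
    (hΨ : ∀ x ∈ Ioo a b, deriv Ψ x = 0) (ha : Φ a = 0) : ∀ x ∈ Icc a b, Φ x = 0 := by
  have hΦ : ∀ x ∈ Ioo a b, HasDerivAt Φ 0 x := fun x hx => by
    rw [← hΨ x hx, ← (hΦΨ.eventuallyEq_of_mem (isOpen_Ioo.mem_nhds hx)).deriv_eq]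
    exact (hd x hx).hasDerivAt
  intro x hx
  simpa [ha] using eq_add_mul_sub_of_hasDerivAt hc hΦ x hx

variable {f : ℝ → ℝ}

theorem ContDiffOn.iteratedDerivWithin_Icc_eq_add_mul_sub {n : WithTop ℕ∞} {k : ℕ}
    (hab : a < b) (hf : ContDiffOn ℝ n f (Icc a b)) (hk : k < n)
    (hc : ∀ x ∈ Ioo a b, iteratedDerivWithin (k + 1) f (Icc a b) x = c) :
    ∀ x ∈ Icc a b, iteratedDerivWithin k f (Icc a b) x =
      iteratedDerivWithin k f (Icc a b) a + c * (x - a) :=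
  eq_add_mul_sub_of_hasDerivAt (hf.continuousOn_iteratedDerivWithin hk.le (uniqueDiffOn_Icc hab))
    fun x hx => hc x hx ▸
      hf.hasDerivAt_iteratedDerivWithin hk (uniqueDiffOn_Icc hab) (Icc_mem_nhds hx.1 hx.2)

theorem eq_left_of_iteratedDerivWithin_three_eq_zero (hab : a < b)
    (hf : ContDiffOn ℝ 3 f (Icc a b))
    (h₃ : ∀ x ∈ Ioo a b, iteratedDerivWithin 3 f (Icc a b) x = 0)
    (ha : derivWithin f (Icc a b) a = 0) (hb : derivWithin f (Icc a b) b = 0) :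
    ∀ x ∈ Icc a b, f x = f a := by
  set c := iteratedDerivWithin 2 f (Icc a b) a
  have h₂ := hf.iteratedDerivWithin_Icc_eq_add_mul_sub hab (k := 2) (by norm_num) h₃
  have h₁ := hf.iteratedDerivWithin_Icc_eq_add_mul_sub hab (k := 1) (c := c) (by norm_num)
    fun x hx => by simpa using h₂ x (Ioo_subset_Icc_self hx)
  simp only [iteratedDerivWithin_one, ha] at h₁
  have hc : c = 0 := by
    have := h₁ b (right_mem_Icc.2 hab.le)
    rw [hb, zero_add, eq_comm, mul_eq_zero] at this
    exact this.resolve_right (sub_ne_zero.2 hab.ne')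
  simpa using hf.iteratedDerivWithin_Icc_eq_add_mul_sub hab (k := 0) (c := 0) (by norm_num)
    fun x hx => by simpa [hc] using h₁ x (Ioo_subset_Icc_self hx)

end Interval

-- The fluxes of system (C) at a point, in terms of the values there of `f`, `g`, `Γ`,
-- `f₃ = ∂ₓ³f`, `h₃ = ∂ₓ³(f + g)`, `s₁ = ∂ₓ(σ ∘ Γ)` and `Γ₁ = ∂ₓΓ`, with `R₃ = -σ₁c`, `S₃ = -σ₂c`.
noncomputable def fluxF (μ σ₁c σ₂c f g f₃ h₃ s₁ : ℝ) : ℝ :=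
  f * ((-σ₁c) * f ^ 2 / 3 * f₃ + (-σ₂c) * μ * (f ^ 2 / 3 + f * g / 2) * h₃ - μ * (f / 2) * s₁)

noncomputable def fluxG (μ σ₁c σ₂c f g f₃ h₃ s₁ : ℝ) : ℝ :=
  g * ((-σ₁c) * f ^ 2 / 2 * f₃ + (-σ₂c) * (g ^ 2 / 3 + μ * (f ^ 2 / 2 + f * g)) * h₃
    - (μ * f + g / 2) * s₁)

noncomputable def fluxΓ (μ D σ₁c σ₂c f g Γ f₃ h₃ s₁ Γ₁ : ℝ) : ℝ :=
  Γ * ((-σ₁c) * f ^ 2 / 2 * f₃ + (-σ₂c) * (g ^ 2 / 2 + μ * (f ^ 2 / 2 + f * g)) * h₃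
    - (μ * f + g) * s₁) + D * Γ₁

theorem eq_zero_of_fluxes_eq_zero {μ D σ₁c σ₂c f g Γ f₃ h₃ s Γ₁ : ℝ} (hμ : 0 ≤ μ) (hD : 0 < D)
    (hσ₁c : σ₁c ≠ 0) (hσ₂c : σ₂c ≠ 0) (hf : 0 < f) (hg : 0 < g) (hΓ : 0 ≤ Γ) (hs : s ≤ 0)
    (hF : fluxF μ σ₁c σ₂c f g f₃ h₃ (s * Γ₁) = 0) (hG : fluxG μ σ₁c σ₂c f g f₃ h₃ (s * Γ₁) = 0)
    (hΓ' : fluxΓ μ D σ₁c σ₂c f g Γ f₃ h₃ (s * Γ₁) Γ₁ = 0) :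
    Γ₁ = 0 ∧ f₃ = 0 ∧ h₃ = 0 := by
  simp only [fluxF, fluxG, fluxΓ] at hF hG hΓ'
  have e₁ := (mul_eq_zero.1 hF).resolve_left hf.ne'
  have e₂ := (mul_eq_zero.1 hG).resolve_left hg.ne'
  -- `σ₁c * σ₂c * K` is the determinant of the `(f₃, h₃)`-coefficients of `e₁`, `e₂`; eliminating
  -- `f₃` and `h₃` from the third equation leaves a positive multiple of `Γ₁`.
  set K := f ^ 2 * g ^ 2 / 9 + μ * f ^ 3 * g / 12
  have hK : 0 < K := by positivity
  have hΓ₁ : Γ₁ * (Γ * (f ^ 2 * g ^ 2 * (g + μ * f) / 36) * (-s) + K * D) = 0 := by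
    linear_combination (Γ * (f ^ 2 * g ^ 2 / 12)) * e₁
      + (Γ * (-(f ^ 2 * g ^ 2) / 6 - μ * f ^ 3 * g / 12)) * e₂ + K * hΓ'
  have hcoeff : 0 < Γ * (f ^ 2 * g ^ 2 * (g + μ * f) / 36) * (-s) + K * D :=
    add_pos_of_nonneg_of_pos (by have := neg_nonneg.2 hs; positivity) (mul_pos hK hD)
  obtain rfl : Γ₁ = 0 := (mul_eq_zero.1 hΓ₁).resolve_right hcoeff.ne'
  refine ⟨rfl, ?_, ?_⟩
  · have : f₃ * (σ₁c * K) = 0 := by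
      linear_combination (-(g ^ 2 / 3 + μ * (f ^ 2 / 2 + f * g))) * e₁
        + (μ * (f ^ 2 / 3 + f * g / 2)) * e₂
    exact (mul_eq_zero.1 this).resolve_right (mul_ne_zero hσ₁c hK.ne')
  · have : h₃ * (σ₂c * K) = 0 := by
      linear_combination (f ^ 2 / 2) * e₁ + (-f ^ 2 / 3) * e₂
    exact (mul_eq_zero.1 this).resolve_right (mul_ne_zero hσ₂c hK.ne')

-- Up to the boundary, the fluxes are formed with derivatives within `[a, b]`, which are continuous
-- there and agree inside with the classical derivatives of the hypotheses.
theorem fluxes_eq_zero_of_deriv_eq_zero {a b μ D σ₁c σ₂c : ℝ} {σ f g Γ : ℝ → ℝ} (hab : a < b)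
    (hσ : ContDiff ℝ 2 σ) (hf : ContDiffOn ℝ 4 f (Icc a b)) (hg : ContDiffOn ℝ 4 g (Icc a b))
    (hΓ : ContDiffOn ℝ 2 Γ (Icc a b))
    (hfluxF : ∀ x ∈ Ioo a b, deriv (fun y => fluxF μ σ₁c σ₂c (f y) (g y) (iteratedDeriv 3 f y)
      (iteratedDeriv 3 (fun ξ => f ξ + g ξ) y) (deriv (fun ξ => σ (Γ ξ)) y)) x = 0)
    (hfluxG : ∀ x ∈ Ioo a b, deriv (fun y => fluxG μ σ₁c σ₂c (f y) (g y) (iteratedDeriv 3 f y)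
      (iteratedDeriv 3 (fun ξ => f ξ + g ξ) y) (deriv (fun ξ => σ (Γ ξ)) y)) x = 0)
    (hfluxΓ : ∀ x ∈ Ioo a b, deriv (fun y => fluxΓ μ D σ₁c σ₂c (f y) (g y) (Γ y)
      (iteratedDeriv 3 f y) (iteratedDeriv 3 (fun ξ => f ξ + g ξ) y)
      (deriv (fun ξ => σ (Γ ξ)) y) (deriv Γ y)) x = 0)
    (hf₃ : iteratedDerivWithin 3 f (Icc a b) a = 0) (hg₃ : iteratedDerivWithin 3 g (Icc a b) a = 0)
    (hΓ₁ : derivWithin Γ (Icc a b) a = 0) :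
    (∀ x ∈ Icc a b, fluxF μ σ₁c σ₂c (f x) (g x) (iteratedDerivWithin 3 f (Icc a b) x)
        (iteratedDerivWithin 3 f (Icc a b) x + iteratedDerivWithin 3 g (Icc a b) x)
        (derivWithin (fun ξ => σ (Γ ξ)) (Icc a b) x) = 0) ∧
      (∀ x ∈ Icc a b, fluxG μ σ₁c σ₂c (f x) (g x) (iteratedDerivWithin 3 f (Icc a b) x)
        (iteratedDerivWithin 3 f (Icc a b) x + iteratedDerivWithin 3 g (Icc a b) x)
        (derivWithin (fun ξ => σ (Γ ξ)) (Icc a b) x) = 0) ∧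
      (∀ x ∈ Icc a b, fluxΓ μ D σ₁c σ₂c (f x) (g x) (Γ x) (iteratedDerivWithin 3 f (Icc a b) x)
        (iteratedDerivWithin 3 f (Icc a b) x + iteratedDerivWithin 3 g (Icc a b) x)
        (derivWithin (fun ξ => σ (Γ ξ)) (Icc a b) x) (derivWithin Γ (Icc a b) x) = 0) := by
  have hs := uniqueDiffOn_Icc hab
  have hvanish : ∀ {Φ Ψ : ℝ → ℝ}, ContDiffOn ℝ 1 Φ (Icc a b) → EqOn Φ Ψ (Ioo a b) →
      (∀ x ∈ Ioo a b, deriv Ψ x = 0) → Φ a = 0 → ∀ x ∈ Icc a b, Φ x = 0 :=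
    fun hΦ => eq_zero_of_eqOn_of_deriv_eq_zero hΦ.continuousOn fun x hx =>
      (hΦ.differentiableOn one_ne_zero).differentiableAt (Icc_mem_nhds hx.1 hx.2)
  have cf : ContDiffOn ℝ 1 f (Icc a b) := hf.of_le (by norm_num)
  have cg : ContDiffOn ℝ 1 g (Icc a b) := hg.of_le (by norm_num)
  have cΓ : ContDiffOn ℝ 1 Γ (Icc a b) := hΓ.of_le (by norm_num)
  have cf₃ : ContDiffOn ℝ 1 (iteratedDerivWithin 3 f (Icc a b)) (Icc a b) :=
    ((contDiffOn_nat_succ_iff_contDiffOn_one_iteratedDerivWithin (n := 3) hs).1 hf).2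
  have cg₃ : ContDiffOn ℝ 1 (iteratedDerivWithin 3 g (Icc a b)) (Icc a b) :=
    ((contDiffOn_nat_succ_iff_contDiffOn_one_iteratedDerivWithin (n := 3) hs).1 hg).2
  have cs₁ : ContDiffOn ℝ 1 (derivWithin (fun ξ => σ (Γ ξ)) (Icc a b)) (Icc a b) :=
    (hσ.comp_contDiffOn hΓ).derivWithin hs (by norm_num)
  have cΓ₁ : ContDiffOn ℝ 1 (derivWithin Γ (Icc a b)) (Icc a b) := hΓ.derivWithin hs (by norm_num)
  have hs₁a : derivWithin (fun ξ => σ (Γ ξ)) (Icc a b) a = 0 := by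
    rw [derivWithin_comp_eq_deriv_mul (hσ.differentiable (by norm_num) _)
      (cΓ.differentiableOn one_ne_zero a (left_mem_Icc.2 hab.le)), hΓ₁, mul_zero]
  refine ⟨hvanish ?_ ?_ hfluxF ?_, hvanish ?_ ?_ hfluxG ?_, hvanish ?_ ?_ hfluxΓ ?_⟩
  all_goals first
    | (simp only [fluxF, fluxG, fluxΓ]; fun_prop)
    | intro y hy
      have hy := Icc_mem_nhds hy.1 hy.2
      simp only [iteratedDerivWithin_of_mem_nhds hy, derivWithin_of_mem_nhds hy,
        iteratedDeriv_fun_add ((hf.contDiffAt hy).of_le (by norm_num : (3 : WithTop ℕ∞) ≤ 4))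
          ((hg.contDiffAt hy).of_le (by norm_num : (3 : WithTop ℕ∞) ≤ 4))]
    | simp [fluxF, fluxG, fluxΓ, hf₃, hg₃, hs₁a, hΓ₁]

/-- The characterization of positive steady states contained in Theorem 4.5 of the
paper: positive steady states of the capillary-driven two-phase thin film system
with insoluble surfactant (with `R₃ = −σ₁ᶜ`, `S₃ = −σ₂ᶜ` and boundary conditions
`∂ₓf = ∂ₓg = ∂ₓΓ = 0`, `∂ₓ³f = ∂ₓ³g = 0` at `x = 0, L`) are constant. -/
theorem capillary_steady_states_constant
    (L : ℝ) (hL : 0 < L)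
    (μ D σ₁c σ₂c : ℝ) (hμ : 0 < μ) (hD : 0 < D) (hσ₁c : 0 < σ₁c) (hσ₂c : 0 < σ₂c)
    (σ : ℝ → ℝ) (hσ : ContDiff ℝ 2 σ) (hσdec : StrictAnti σ)
    (f g Γ : ℝ → ℝ)
    (hf : ContDiffOn ℝ 4 f (Icc 0 L))
    (hg : ContDiffOn ℝ 4 g (Icc 0 L))
    (hΓ : ContDiffOn ℝ 2 Γ (Icc 0 L))
    (hfpos : ∀ x ∈ Icc (0 : ℝ) L, 0 < f x)
    (hgpos : ∀ x ∈ Icc (0 : ℝ) L, 0 < g x)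
    (hΓpos : ∀ x ∈ Icc (0 : ℝ) L, 0 < Γ x)
    -- the x-derivatives of the three fluxes vanish identically on (0,L)
    (hflux_f : ∀ x ∈ Ioo (0 : ℝ) L,
      deriv (fun y => f y *
        ((-σ₁c) * (f y) ^ 2 / 3 * iteratedDeriv 3 f y
         + (-σ₂c) * μ * ((f y) ^ 2 / 3 + f y * g y / 2)
            * iteratedDeriv 3 (fun ξ => f ξ + g ξ) y
         - μ * (f y / 2) * deriv (fun ξ => σ (Γ ξ)) y)) x = 0)
    (hflux_g : ∀ x ∈ Ioo (0 : ℝ) L,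
      deriv (fun y => g y *
        ((-σ₁c) * (f y) ^ 2 / 2 * iteratedDeriv 3 f y
         + (-σ₂c) * ((g y) ^ 2 / 3 + μ * ((f y) ^ 2 / 2 + f y * g y))
            * iteratedDeriv 3 (fun ξ => f ξ + g ξ) y
         - (μ * f y + g y / 2) * deriv (fun ξ => σ (Γ ξ)) y)) x = 0)
    (hflux_Γ : ∀ x ∈ Ioo (0 : ℝ) L,
      deriv (fun y => Γ y *
        ((-σ₁c) * (f y) ^ 2 / 2 * iteratedDeriv 3 f y
         + (-σ₂c) * ((g y) ^ 2 / 2 + μ * ((f y) ^ 2 / 2 + f y * g y))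
            * iteratedDeriv 3 (fun ξ => f ξ + g ξ) y
         - (μ * f y + g y) * deriv (fun ξ => σ (Γ ξ)) y)
        + D * deriv Γ y) x = 0)
    -- boundary conditions at x = 0 and x = L
    (hbc : derivWithin f (Icc 0 L) 0 = 0 ∧ derivWithin f (Icc 0 L) L = 0 ∧
      derivWithin g (Icc 0 L) 0 = 0 ∧ derivWithin g (Icc 0 L) L = 0 ∧
      derivWithin Γ (Icc 0 L) 0 = 0 ∧ derivWithin Γ (Icc 0 L) L = 0 ∧
      iteratedDerivWithin 3 f (Icc 0 L) 0 = 0 ∧ iteratedDerivWithin 3 f (Icc 0 L) L = 0 ∧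
      iteratedDerivWithin 3 g (Icc 0 L) 0 = 0 ∧ iteratedDerivWithin 3 g (Icc 0 L) L = 0) :
    ∀ x ∈ Icc (0 : ℝ) L, f x = f 0 ∧ g x = g 0 ∧ Γ x = Γ 0 := by
  obtain ⟨hf₁0, hf₁L, hg₁0, hg₁L, hΓ₁0, -, hf₃0, -, hg₃0, -⟩ := hbc
  have hfluxes := fluxes_eq_zero_of_deriv_eq_zero hL hσ hf hg hΓ hflux_f hflux_g hflux_Γ
    hf₃0 hg₃0 hΓ₁0
  have hjets : ∀ x ∈ Icc 0 L, derivWithin Γ (Icc 0 L) x = 0 ∧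
      iteratedDerivWithin 3 f (Icc 0 L) x = 0 ∧
      iteratedDerivWithin 3 f (Icc 0 L) x + iteratedDerivWithin 3 g (Icc 0 L) x = 0 := by
    intro x hx
    have hF := hfluxes.1 x hx
    have hG := hfluxes.2.1 x hx
    have hΓ' := hfluxes.2.2 x hx
    rw [derivWithin_comp_eq_deriv_mul (hσ.differentiable (by norm_num) _)
      (hΓ.differentiableOn (by norm_num) x hx)] at hF hG hΓ'
    exact eq_zero_of_fluxes_eq_zero hμ.le hD hσ₁c.ne' hσ₂c.ne' (hfpos x hx) (hgpos x hx)
      (hΓpos x hx).le hσdec.antitone.deriv_nonpos hF hG hΓ'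
  have hf_const := eq_left_of_iteratedDerivWithin_three_eq_zero hL (hf.of_le (by norm_num))
    (fun x hx => (hjets x (Ioo_subset_Icc_self hx)).2.1) hf₁0 hf₁L
  have hg_const := eq_left_of_iteratedDerivWithin_three_eq_zero hL (hg.of_le (by norm_num))
    (fun x hx => by linarith [hjets x (Ioo_subset_Icc_self hx)]) hg₁0 hg₁L
  have hΓ_const := hΓ.iteratedDerivWithin_Icc_eq_add_mul_sub hL (k := 0) (c := 0) (by norm_num)
    fun x hx => by simpa using (hjets x (Ioo_subset_Icc_self hx)).1
  intro x hx
  exact ⟨hf_const x hx, hg_const x hx, by simpa using hΓ_const x hx⟩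
end

section
/- Let μ > 0, D > 0, R₁ > 0, S₁ > 0, let f, g, Γ > 0 be real numbers and let s′ ≤ 0 be a real number (standing for σ′(Γ)). Then every complex eigenvalue λ of the 3×3 real matrix a_G(f,g,Γ) with rows row 1 = ((R₁+S₁μ)f³/3 + S₁μf²g/2, S₁μ(f³/3 + f²g/2), −μ(f²/2)s′), row 2 = (S₁g³/3 + (R₁+S₁μ)f²g/2 + S₁μfg², S₁g³/3 + S₁μ(f²g/2 + fg²), −(μfg + g²/2)s′), row 3 = ((S₁g²/2 + (R₁+S₁μ)f²/2 + S₁μfg)Γ, (S₁g²/2 + S₁μ(f²/2 + fg))Γ, −(μf + g)Γs′ + D) satisfies Re λ > 0. -/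
open Matrix

private lemma aux_sq_pos {a : ℝ} (h : a ≠ 0) : 0 < a ^ 2 :=
  (sq_nonneg a).lt_of_ne (Ne.symm (pow_ne_zero 2 h))

/-- Nonnegativity of the sum-of-squares expression. -/
private lemma Fq_nonneg (μ R₁ S₁ f g t x1 x2 x3 : ℝ)
    (hμ : 0 < μ) (hf : 0 < f) (hg : 0 < g) :
    0 ≤ f * ((μ * (S₁ * x2 * g + t * x3) + (R₁ * x1 + μ * S₁ * x2) * f / 2) ^ 2
          + (R₁ * x1 + μ * S₁ * x2) ^ 2 * f ^ 2 / 12)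
        + μ * g * ((t * x3 + S₁ * x2 * g / 2) ^ 2 + (S₁ * x2) ^ 2 * g ^ 2 / 12) := by
  have h1 : (0:ℝ) ≤ (μ * (S₁ * x2 * g + t * x3) + (R₁ * x1 + μ * S₁ * x2) * f / 2) ^ 2
      + (R₁ * x1 + μ * S₁ * x2) ^ 2 * f ^ 2 / 12 := by positivity
  have h2 : (0:ℝ) ≤ (t * x3 + S₁ * x2 * g / 2) ^ 2 + (S₁ * x2) ^ 2 * g ^ 2 / 12 := by
    positivity
  have := mul_nonneg hf.le h1
  have := mul_nonneg (mul_nonneg hμ.le hg.le) h2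
  linarith

/-- Strict positivity of the sum-of-squares expression. -/
private lemma Fq_pos (μ R₁ S₁ f g t x1 x2 x3 : ℝ)
    (hμ : 0 < μ) (hR₁ : 0 < R₁) (hS₁ : 0 < S₁) (hf : 0 < f) (hg : 0 < g)
    (h : x1 ≠ 0 ∨ x2 ≠ 0) :
    0 < f * ((μ * (S₁ * x2 * g + t * x3) + (R₁ * x1 + μ * S₁ * x2) * f / 2) ^ 2
          + (R₁ * x1 + μ * S₁ * x2) ^ 2 * f ^ 2 / 12)
        + μ * g * ((t * x3 + S₁ * x2 * g / 2) ^ 2 + (S₁ * x2) ^ 2 * g ^ 2 / 12) := by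
  rcases eq_or_ne x2 0 with h2 | h2
  · have hx1 : x1 ≠ 0 := h.resolve_right (by simp [h2])
    have hne : R₁ * x1 + μ * S₁ * x2 ≠ 0 := by
      rw [h2]; simpa using mul_ne_zero hR₁.ne' hx1
    have hA : 0 < (R₁ * x1 + μ * S₁ * x2) ^ 2 * f ^ 2 / 12 :=
      div_pos (mul_pos (aux_sq_pos hne) (pow_pos hf 2)) (by norm_num)
    have hfirst : 0 < f * ((μ * (S₁ * x2 * g + t * x3) + (R₁ * x1 + μ * S₁ * x2) * f / 2) ^ 2
        + (R₁ * x1 + μ * S₁ * x2) ^ 2 * f ^ 2 / 12) :=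
      mul_pos hf (add_pos_of_nonneg_of_pos (sq_nonneg _) hA)
    have hsecond : 0 ≤ μ * g * ((t * x3 + S₁ * x2 * g / 2) ^ 2 + (S₁ * x2) ^ 2 * g ^ 2 / 12) :=
      mul_nonneg (mul_nonneg hμ.le hg.le) (by positivity)
    linarith
  · have hA : 0 < (S₁ * x2) ^ 2 * g ^ 2 / 12 :=
      div_pos (mul_pos (aux_sq_pos (mul_ne_zero hS₁.ne' h2)) (pow_pos hg 2)) (by norm_num)
    have hsecond : 0 < μ * g * ((t * x3 + S₁ * x2 * g / 2) ^ 2 + (S₁ * x2) ^ 2 * g ^ 2 / 12) :=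
      mul_pos (mul_pos hμ hg) (add_pos_of_nonneg_of_pos (sq_nonneg _) hA)
    have hfirst : 0 ≤ f * ((μ * (S₁ * x2 * g + t * x3) + (R₁ * x1 + μ * S₁ * x2) * f / 2) ^ 2
        + (R₁ * x1 + μ * S₁ * x2) ^ 2 * f ^ 2 / 12) :=
      mul_nonneg hf.le (by positivity)
    linarith

set_option maxHeartbeats 2000000 in
/-- The diffusion matrix `a_G(f,g,Γ)` of the gravity-driven two-phase thin film system
with insoluble surfactant has spectrum in the open right half-plane, under assumptions
G1 (`R₁, S₁ > 0`) and S1 (`s′ = σ′(Γ) ≤ 0`): every complex eigenvalue `λ` of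
`a_G(f,g,Γ)` satisfies `Re λ > 0`. -/
theorem gravity_diffusion_matrix_spectrum_positive
    (μ D R₁ S₁ f g Γ s' : ℝ)
    (hμ : 0 < μ) (hD : 0 < D) (hR₁ : 0 < R₁) (hS₁ : 0 < S₁)
    (hf : 0 < f) (hg : 0 < g) (hΓ : 0 < Γ) (hs' : s' ≤ 0) :
    ∀ (lam : ℂ) (v : Fin 3 → ℂ), v ≠ 0 →
      ((!![(R₁ + S₁ * μ) * f ^ 3 / 3 + S₁ * μ * f ^ 2 * g / 2,
            S₁ * μ * (f ^ 3 / 3 + f ^ 2 * g / 2),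
            -μ * (f ^ 2 / 2) * s';
          S₁ * g ^ 3 / 3 + (R₁ + S₁ * μ) * f ^ 2 * g / 2 + S₁ * μ * f * g ^ 2,
            S₁ * g ^ 3 / 3 + S₁ * μ * (f ^ 2 * g / 2 + f * g ^ 2),
            -(μ * f * g + g ^ 2 / 2) * s';
          (S₁ * g ^ 2 / 2 + (R₁ + S₁ * μ) * f ^ 2 / 2 + S₁ * μ * f * g) * Γ,
            (S₁ * g ^ 2 / 2 + S₁ * μ * (f ^ 2 / 2 + f * g)) * Γ,
            -(μ * f + g) * Γ * s' + D] : Matrix (Fin 3) (Fin 3) ℝ).map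
          (fun r : ℝ => (r : ℂ))) *ᵥ v = lam • v →
      0 < lam.re := by
  intro lam v hv hmul
  have e0 := congrFun hmul 0
  have e1 := congrFun hmul 1
  have e2 := congrFun hmul 2
  simp only [Matrix.mulVec, dotProduct, Fin.sum_univ_three, Matrix.map_apply,
    Matrix.of_apply, Matrix.cons_val', Matrix.cons_val_zero, Matrix.cons_val_one,
    Matrix.head_cons, Matrix.empty_val', Matrix.cons_val_fin_one, Matrix.head_fin_const,
    Matrix.cons_val_two, Matrix.tail_cons, Pi.smul_apply, smul_eq_mul] at e0 e1 e2
  have r0 := congrArg Complex.re e0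
  have i0 := congrArg Complex.im e0
  have r1 := congrArg Complex.re e1
  have i1 := congrArg Complex.im e1
  have r2 := congrArg Complex.re e2
  have i2 := congrArg Complex.im e2
  simp only [Complex.add_re, Complex.add_im, Complex.mul_re, Complex.mul_im,
    Complex.ofReal_re, Complex.ofReal_im, zero_mul, mul_zero, sub_zero, zero_add,
    add_zero] at r0 i0 r1 i1 r2 i2
  set X1 := (v 0).re with hX1
  set Y1 := (v 0).im with hY1
  set X2 := (v 1).re with hX2
  set Y2 := (v 1).im with hY2
  set X3 := (v 2).re with hX3
  set Y3 := (v 2).im with hY3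
  -- the key identity: Re λ · (positive form) = SOS form
  have main : lam.re *
      (Γ * R₁ * (X1 ^ 2 + Y1 ^ 2) + Γ * μ * S₁ * ((X1 + X2) ^ 2 + (Y1 + Y2) ^ 2)
        + μ * (-s') * (X3 ^ 2 + Y3 ^ 2))
      = Γ * ((f * ((μ * (S₁ * (X1 + X2) * g + (-s') * X3)
                + (R₁ * X1 + μ * S₁ * (X1 + X2)) * f / 2) ^ 2
              + (R₁ * X1 + μ * S₁ * (X1 + X2)) ^ 2 * f ^ 2 / 12)
            + μ * g * (((-s') * X3 + S₁ * (X1 + X2) * g / 2) ^ 2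
              + (S₁ * (X1 + X2)) ^ 2 * g ^ 2 / 12))
          + (f * ((μ * (S₁ * (Y1 + Y2) * g + (-s') * Y3)
                + (R₁ * Y1 + μ * S₁ * (Y1 + Y2)) * f / 2) ^ 2
              + (R₁ * Y1 + μ * S₁ * (Y1 + Y2)) ^ 2 * f ^ 2 / 12)
            + μ * g * (((-s') * Y3 + S₁ * (Y1 + Y2) * g / 2) ^ 2
              + (S₁ * (Y1 + Y2)) ^ 2 * g ^ 2 / 12)))
        + D * μ * (-s') * (X3 ^ 2 + Y3 ^ 2) := by
    linear_combination (-(Γ * R₁ * X1 + Γ * μ * S₁ * (X1 + X2))) * r0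
      + (-(Γ * μ * S₁ * (X1 + X2))) * r1 + (μ * s' * X3) * r2
      + (-(Γ * R₁ * Y1 + Γ * μ * S₁ * (Y1 + Y2))) * i0
      + (-(Γ * μ * S₁ * (Y1 + Y2))) * i1 + (μ * s' * Y3) * i2
  have hFXnn := Fq_nonneg μ R₁ S₁ f g (-s') X1 (X1 + X2) X3 hμ hf hg
  have hFYnn := Fq_nonneg μ R₁ S₁ f g (-s') Y1 (Y1 + Y2) Y3 hμ hf hg
  have ht : 0 ≤ -s' := neg_nonneg.mpr hs'
  by_cases hw12 : v 0 = 0 ∧ v 1 = 0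
  · -- first two components of the transformed vector vanish
    obtain ⟨h0, h1⟩ := hw12
    have h2 : v 2 ≠ 0 := by
      intro h2
      exact hv (funext fun i => by fin_cases i <;> simpa [h0, h1, h2])
    have hX10 : X1 = 0 := by rw [hX1, h0]; simp
    have hY10 : Y1 = 0 := by rw [hY1, h0]; simp
    have hX20 : X2 = 0 := by rw [hX2, h1]; simp
    have hY20 : Y2 = 0 := by rw [hY2, h1]; simp
    have h3 : X3 ≠ 0 ∨ Y3 ≠ 0 := by
      by_contra hc
      push_neg at hc
      exact h2 (Complex.ext (by simpa [hX3] using hc.1) (by simpa [hY3] using hc.2))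
    have hsq3 : 0 < X3 ^ 2 + Y3 ^ 2 := by
      rcases h3 with h | h
      · exact add_pos_of_pos_of_nonneg (aux_sq_pos h) (sq_nonneg Y3)
      · exact add_pos_of_nonneg_of_pos (sq_nonneg X3) (aux_sq_pos h)
    rcases lt_or_eq_of_le hs' with hsneg | hszero
    · -- s' < 0 : the weight on the third component is positive
      have htpos : 0 < -s' := by linarith
      have hP : 0 < Γ * R₁ * (X1 ^ 2 + Y1 ^ 2) + Γ * μ * S₁ * ((X1 + X2) ^ 2 + (Y1 + Y2) ^ 2)
          + μ * (-s') * (X3 ^ 2 + Y3 ^ 2) := by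
        rw [hX10, hY10, hX20, hY20]
        simpa using mul_pos (mul_pos hμ htpos) hsq3
      have hN : 0 < Γ * ((f * ((μ * (S₁ * (X1 + X2) * g + (-s') * X3)
                + (R₁ * X1 + μ * S₁ * (X1 + X2)) * f / 2) ^ 2
              + (R₁ * X1 + μ * S₁ * (X1 + X2)) ^ 2 * f ^ 2 / 12)
            + μ * g * (((-s') * X3 + S₁ * (X1 + X2) * g / 2) ^ 2
              + (S₁ * (X1 + X2)) ^ 2 * g ^ 2 / 12))
          + (f * ((μ * (S₁ * (Y1 + Y2) * g + (-s') * Y3)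
                + (R₁ * Y1 + μ * S₁ * (Y1 + Y2)) * f / 2) ^ 2
              + (R₁ * Y1 + μ * S₁ * (Y1 + Y2)) ^ 2 * f ^ 2 / 12)
            + μ * g * (((-s') * Y3 + S₁ * (Y1 + Y2) * g / 2) ^ 2
              + (S₁ * (Y1 + Y2)) ^ 2 * g ^ 2 / 12)))
        + D * μ * (-s') * (X3 ^ 2 + Y3 ^ 2) := by
        have hlast : 0 < D * μ * (-s') * (X3 ^ 2 + Y3 ^ 2) :=
          mul_pos (mul_pos (mul_pos hD hμ) htpos) hsq3
        have hnn := mul_nonneg hΓ.le (add_nonneg hFXnn hFYnn)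
        exact add_pos_of_nonneg_of_pos hnn hlast
      have hre : lam.re = _ / _ := (eq_div_iff hP.ne').mpr main
      rw [hre]
      exact div_pos hN hP
    · -- s' = 0 : then λ = D on the third component
      have hD3 : (D : ℂ) * v 2 = lam * v 2 := by
        rw [h0, h1, hszero] at e2
        simpa using e2
      have : lam = (D : ℂ) := (mul_right_cancel₀ h2 hD3).symm
      rw [this]
      simpa using hD
  · -- one of the first two transformed components is nonzero
    have hw : v 0 ≠ 0 ∨ v 0 + v 1 ≠ 0 := by
      by_contra hc
      push_neg at hc
      exact hw12 ⟨hc.1, by linear_combination hc.2 - hc.1⟩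
    have hkey : (X1 ≠ 0 ∨ X1 + X2 ≠ 0) ∨ (Y1 ≠ 0 ∨ Y1 + Y2 ≠ 0) := by
      rcases hw with h | h
      · by_contra hc
        push_neg at hc
        exact h (Complex.ext (by simpa [hX1] using hc.1.1) (by simpa [hY1] using hc.2.1))
      · by_contra hc
        push_neg at hc
        refine h (Complex.ext ?_ ?_)
        · simpa [Complex.add_re, ← hX1, ← hX2] using hc.1.2
        · simpa [Complex.add_im, ← hY1, ← hY2] using hc.2.2
    -- positivity of the weight form P
    have hP : 0 < Γ * R₁ * (X1 ^ 2 + Y1 ^ 2) + Γ * μ * S₁ * ((X1 + X2) ^ 2 + (Y1 + Y2) ^ 2)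
        + μ * (-s') * (X3 ^ 2 + Y3 ^ 2) := by
      have hb1 : 0 ≤ Γ * R₁ * (X1 ^ 2 + Y1 ^ 2) :=
        mul_nonneg (mul_nonneg hΓ.le hR₁.le) (by positivity)
      have hb2 : 0 ≤ Γ * μ * S₁ * ((X1 + X2) ^ 2 + (Y1 + Y2) ^ 2) :=
        mul_nonneg (mul_nonneg (mul_nonneg hΓ.le hμ.le) hS₁.le) (by positivity)
      have hb3 : 0 ≤ μ * (-s') * (X3 ^ 2 + Y3 ^ 2) :=
        mul_nonneg (mul_nonneg hμ.le ht) (by positivity)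
      rcases hkey with (h | h) | (h | h)
      · exact add_pos_of_pos_of_nonneg (add_pos_of_pos_of_nonneg
          (mul_pos (mul_pos hΓ hR₁)
            (add_pos_of_pos_of_nonneg (aux_sq_pos h) (sq_nonneg Y1))) hb2) hb3
      · exact add_pos_of_pos_of_nonneg (add_pos_of_nonneg_of_pos hb1
          (mul_pos (mul_pos (mul_pos hΓ hμ) hS₁)
            (add_pos_of_pos_of_nonneg (aux_sq_pos h) (sq_nonneg (Y1 + Y2))))) hb3
      · exact add_pos_of_pos_of_nonneg (add_pos_of_pos_of_nonneg
          (mul_pos (mul_pos hΓ hR₁)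
            (add_pos_of_nonneg_of_pos (sq_nonneg X1) (aux_sq_pos h))) hb2) hb3
      · exact add_pos_of_pos_of_nonneg (add_pos_of_nonneg_of_pos hb1
          (mul_pos (mul_pos (mul_pos hΓ hμ) hS₁)
            (add_pos_of_nonneg_of_pos (sq_nonneg (X1 + X2)) (aux_sq_pos h)))) hb3
    -- positivity of the SOS form N
    have hFsum : 0 < (f * ((μ * (S₁ * (X1 + X2) * g + (-s') * X3)
                + (R₁ * X1 + μ * S₁ * (X1 + X2)) * f / 2) ^ 2
              + (R₁ * X1 + μ * S₁ * (X1 + X2)) ^ 2 * f ^ 2 / 12)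
            + μ * g * (((-s') * X3 + S₁ * (X1 + X2) * g / 2) ^ 2
              + (S₁ * (X1 + X2)) ^ 2 * g ^ 2 / 12))
          + (f * ((μ * (S₁ * (Y1 + Y2) * g + (-s') * Y3)
                + (R₁ * Y1 + μ * S₁ * (Y1 + Y2)) * f / 2) ^ 2
              + (R₁ * Y1 + μ * S₁ * (Y1 + Y2)) ^ 2 * f ^ 2 / 12)
            + μ * g * (((-s') * Y3 + S₁ * (Y1 + Y2) * g / 2) ^ 2
              + (S₁ * (Y1 + Y2)) ^ 2 * g ^ 2 / 12)) := by
      rcases hkey with h | h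
      · exact add_pos_of_pos_of_nonneg
          (Fq_pos μ R₁ S₁ f g (-s') X1 (X1 + X2) X3 hμ hR₁ hS₁ hf hg h) hFYnn
      · exact add_pos_of_nonneg_of_pos hFXnn
          (Fq_pos μ R₁ S₁ f g (-s') Y1 (Y1 + Y2) Y3 hμ hR₁ hS₁ hf hg h)
    have hN : 0 < Γ * ((f * ((μ * (S₁ * (X1 + X2) * g + (-s') * X3)
                + (R₁ * X1 + μ * S₁ * (X1 + X2)) * f / 2) ^ 2
              + (R₁ * X1 + μ * S₁ * (X1 + X2)) ^ 2 * f ^ 2 / 12)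
            + μ * g * (((-s') * X3 + S₁ * (X1 + X2) * g / 2) ^ 2
              + (S₁ * (X1 + X2)) ^ 2 * g ^ 2 / 12))
          + (f * ((μ * (S₁ * (Y1 + Y2) * g + (-s') * Y3)
                + (R₁ * Y1 + μ * S₁ * (Y1 + Y2)) * f / 2) ^ 2
              + (R₁ * Y1 + μ * S₁ * (Y1 + Y2)) ^ 2 * f ^ 2 / 12)
            + μ * g * (((-s') * Y3 + S₁ * (Y1 + Y2) * g / 2) ^ 2
              + (S₁ * (Y1 + Y2)) ^ 2 * g ^ 2 / 12)))
        + D * μ * (-s') * (X3 ^ 2 + Y3 ^ 2) := by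
      have h1 := mul_pos hΓ hFsum
      have h2 : 0 ≤ D * μ * (-s') * (X3 ^ 2 + Y3 ^ 2) :=
        mul_nonneg (mul_nonneg (mul_nonneg hD.le hμ.le) ht) (by positivity)
      exact add_pos_of_pos_of_nonneg h1 h2
    have hre : lam.re = _ / _ := (eq_div_iff hP.ne').mpr main
    rw [hre]
    exact div_pos hN hP
end

section
/- Let μ > 0 and σ₁ᶜ, σ₂ᶜ > 0, and let f, g > 0 be real numbers. Consider the 2×2 real matrix M(f,g) with entries M₁₁ = (σ₁ᶜ + σ₂ᶜμ)f³/3 + σ₂ᶜμf²g/2, M₁₂ = σ₂ᶜμ(f³/3 + f²g/2), M₂₁ = σ₂ᶜg³/3 + (σ₁ᶜ + σ₂ᶜμ)f²g/2 + σ₂ᶜμfg², M₂₂ = σ₂ᶜg³/3 + σ₂ᶜμ(f²g/2 + fg²). Then trace M(f,g) > 0, det M(f,g) > 0 and (trace M(f,g))² − 4 det M(f,g) > 0; consequently M(f,g) has two distinct real eigenvalues, both positive. -/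
open Matrix

theorem two_by_two_aux (a b c d : ℝ) (hT : 0 < a + d) (hb : 0 < b) (hc : 0 < c)
    (hD : 0 < a * d - b * c) :
    0 < (!![a, b; c, d] : Matrix (Fin 2) (Fin 2) ℝ).trace ∧
    0 < (!![a, b; c, d] : Matrix (Fin 2) (Fin 2) ℝ).det ∧
    0 < (!![a, b; c, d] : Matrix (Fin 2) (Fin 2) ℝ).trace ^ 2
        - 4 * (!![a, b; c, d] : Matrix (Fin 2) (Fin 2) ℝ).det ∧
    ∃ lam₁ lam₂ : ℝ, lam₁ ≠ lam₂ ∧ 0 < lam₁ ∧ 0 < lam₂ ∧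
      ∀ lam : ℝ,
        (∃ v : Fin 2 → ℝ, v ≠ 0 ∧
          (!![a, b; c, d] : Matrix (Fin 2) (Fin 2) ℝ) *ᵥ v = lam • v)
        ↔ (lam = lam₁ ∨ lam = lam₂) := by
  have htr : (!![a, b; c, d] : Matrix (Fin 2) (Fin 2) ℝ).trace = a + d :=
    Matrix.trace_fin_two_of a b c d
  have hdet : (!![a, b; c, d] : Matrix (Fin 2) (Fin 2) ℝ).det = a * d - b * c :=
    Matrix.det_fin_two_of a b c d
  rw [htr, hdet]
  set T := a + d with hTdef
  set D := a * d - b * c with hDdef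
  have hdisc : 0 < T ^ 2 - 4 * D := by
    have := mul_pos hb hc
    nlinarith [sq_nonneg (a - d)]
  set s := Real.sqrt (T ^ 2 - 4 * D) with hsdef
  have hs : 0 < s := Real.sqrt_pos.2 hdisc
  have hs2 : s ^ 2 = T ^ 2 - 4 * D := Real.sq_sqrt hdisc.le
  have hsT : s < T := by nlinarith
  refine ⟨hT, hD, hdisc, (T + s) / 2, (T - s) / 2, by intro h; linarith [hs],
    by linarith, by linarith, ?_⟩
  intro lam
  constructor
  · rintro ⟨v, hv0, hv⟩
    have e0 : a * v 0 + b * v 1 = lam * v 0 := by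
      have := congrFun hv 0
      simpa [Matrix.mulVec, dotProduct, Fin.sum_univ_two] using this
    have e1 : c * v 0 + d * v 1 = lam * v 1 := by
      have := congrFun hv 1
      simpa [Matrix.mulVec, dotProduct, Fin.sum_univ_two] using this
    have hchar : lam ^ 2 - T * lam + D = 0 := by
      have hone : v 0 ≠ 0 ∨ v 1 ≠ 0 := by
        by_contra h
        push_neg at h
        apply hv0
        funext i
        fin_cases i <;> simp [h.1, h.2]
      rcases hone with h | h
      · have h0 : (lam ^ 2 - T * lam + D) * v 0 = 0 := by
          rw [hTdef, hDdef]; linear_combination (d - lam) * e0 - b * e1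
        exact (mul_eq_zero.mp h0).resolve_right h
      · have h1 : (lam ^ 2 - T * lam + D) * v 1 = 0 := by
          rw [hTdef, hDdef]; linear_combination (a - lam) * e1 - c * e0
        exact (mul_eq_zero.mp h1).resolve_right h
    have hfac : (lam - (T + s) / 2) * (lam - (T - s) / 2) = 0 := by
      linear_combination hchar - hs2 / 4
    rcases mul_eq_zero.mp hfac with h | h
    · left; linarith
    · right; linarith
  · intro h
    have hchar : lam ^ 2 - T * lam + D = 0 := by
      rcases h with h | h <;> rw [h] <;> linear_combination hs2 / 4
    refine ⟨![b, lam - a], ?_, ?_⟩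
    · intro h'
      have := congrFun h' 0
      simp at this
      exact hb.ne' this
    · funext i
      fin_cases i
      · simp [Matrix.mulVec, dotProduct, Fin.sum_univ_two]
        ring
      · simp [Matrix.mulVec, dotProduct, Fin.sum_univ_two]
        rw [hTdef, hDdef] at hchar
        linear_combination -hchar


/-- The matrix `M(f,g) = −ã(X)`, the negative of the principal symbol matrix of the
fourth-order operator `A₁₁(f,g)` in the capillary-driven two-phase thin film system
(`R₃ = −σ₁ᶜ`, `S₃ = −σ₂ᶜ`), has positive trace, positive determinant and positive
discriminant; consequently it has two distinct real eigenvalues, both positive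
(Proposition 4.3 of the paper). -/
theorem capillary_symbol_matrix_eigenvalues
    (μ σ₁c σ₂c f g : ℝ)
    (hμ : 0 < μ) (hσ₁c : 0 < σ₁c) (hσ₂c : 0 < σ₂c) (hf : 0 < f) (hg : 0 < g) :
    0 < (!![(σ₁c + σ₂c * μ) * f ^ 3 / 3 + σ₂c * μ * f ^ 2 * g / 2,
            σ₂c * μ * (f ^ 3 / 3 + f ^ 2 * g / 2);
          σ₂c * g ^ 3 / 3 + (σ₁c + σ₂c * μ) * f ^ 2 * g / 2 + σ₂c * μ * f * g ^ 2,
            σ₂c * g ^ 3 / 3 + σ₂c * μ * (f ^ 2 * g / 2 + f * g ^ 2)] :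
          Matrix (Fin 2) (Fin 2) ℝ).trace ∧
    0 < (!![(σ₁c + σ₂c * μ) * f ^ 3 / 3 + σ₂c * μ * f ^ 2 * g / 2,
            σ₂c * μ * (f ^ 3 / 3 + f ^ 2 * g / 2);
          σ₂c * g ^ 3 / 3 + (σ₁c + σ₂c * μ) * f ^ 2 * g / 2 + σ₂c * μ * f * g ^ 2,
            σ₂c * g ^ 3 / 3 + σ₂c * μ * (f ^ 2 * g / 2 + f * g ^ 2)] :
          Matrix (Fin 2) (Fin 2) ℝ).det ∧
    0 < (!![(σ₁c + σ₂c * μ) * f ^ 3 / 3 + σ₂c * μ * f ^ 2 * g / 2,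
            σ₂c * μ * (f ^ 3 / 3 + f ^ 2 * g / 2);
          σ₂c * g ^ 3 / 3 + (σ₁c + σ₂c * μ) * f ^ 2 * g / 2 + σ₂c * μ * f * g ^ 2,
            σ₂c * g ^ 3 / 3 + σ₂c * μ * (f ^ 2 * g / 2 + f * g ^ 2)] :
          Matrix (Fin 2) (Fin 2) ℝ).trace ^ 2
        - 4 * (!![(σ₁c + σ₂c * μ) * f ^ 3 / 3 + σ₂c * μ * f ^ 2 * g / 2,
            σ₂c * μ * (f ^ 3 / 3 + f ^ 2 * g / 2);
          σ₂c * g ^ 3 / 3 + (σ₁c + σ₂c * μ) * f ^ 2 * g / 2 + σ₂c * μ * f * g ^ 2,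
            σ₂c * g ^ 3 / 3 + σ₂c * μ * (f ^ 2 * g / 2 + f * g ^ 2)] :
          Matrix (Fin 2) (Fin 2) ℝ).det ∧
    ∃ lam₁ lam₂ : ℝ, lam₁ ≠ lam₂ ∧ 0 < lam₁ ∧ 0 < lam₂ ∧
      ∀ lam : ℝ,
        (∃ v : Fin 2 → ℝ, v ≠ 0 ∧
          (!![(σ₁c + σ₂c * μ) * f ^ 3 / 3 + σ₂c * μ * f ^ 2 * g / 2,
              σ₂c * μ * (f ^ 3 / 3 + f ^ 2 * g / 2);
            σ₂c * g ^ 3 / 3 + (σ₁c + σ₂c * μ) * f ^ 2 * g / 2 + σ₂c * μ * f * g ^ 2,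
              σ₂c * g ^ 3 / 3 + σ₂c * μ * (f ^ 2 * g / 2 + f * g ^ 2)] :
            Matrix (Fin 2) (Fin 2) ℝ) *ᵥ v = lam • v)
        ↔ (lam = lam₁ ∨ lam = lam₂) := by
  have hD : 0 < ((σ₁c + σ₂c * μ) * f ^ 3 / 3 + σ₂c * μ * f ^ 2 * g / 2) *
      (σ₂c * g ^ 3 / 3 + σ₂c * μ * (f ^ 2 * g / 2 + f * g ^ 2)) -
      (σ₂c * μ * (f ^ 3 / 3 + f ^ 2 * g / 2)) *
      (σ₂c * g ^ 3 / 3 + (σ₁c + σ₂c * μ) * f ^ 2 * g / 2 + σ₂c * μ * f * g ^ 2) := by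
    have h : ((σ₁c + σ₂c * μ) * f ^ 3 / 3 + σ₂c * μ * f ^ 2 * g / 2) *
        (σ₂c * g ^ 3 / 3 + σ₂c * μ * (f ^ 2 * g / 2 + f * g ^ 2)) -
        (σ₂c * μ * (f ^ 3 / 3 + f ^ 2 * g / 2)) *
        (σ₂c * g ^ 3 / 3 + (σ₁c + σ₂c * μ) * f ^ 2 * g / 2 + σ₂c * μ * f * g ^ 2)
        = σ₁c * f ^ 2 * (σ₂c * f * g ^ 3 / 9 + σ₂c * μ * f ^ 2 * g ^ 2 / 12) := by
      ring
    rw [h]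
    positivity
  exact two_by_two_aux _ _ _ _ (by positivity) (by positivity) (by positivity) hD
end

section
/- Let μ > 0, D > 0, R₁ > 0, S₁ > 0, f* > 0, g* > 0, and let σ ∈ C²(ℝ) with σ′(s) ≤ 0 for all s ≥ 0. For z > 0 and Γ* ≥ 0 define the symmetric 3×3 real matrix b(z,Γ*) with entries (writing s′ := σ′(Γ*)): b₁₁ = (S₁μ/R₁)(S₁g*³/3 + S₁μ(f*³/3 + f*²g* + f*g*²)), b₁₂ = b₂₁ = S₁μ(f*³/3 + f*²g*/2), b₂₂ = R₁f*³/3, b₁₃ = b₃₁ = −(1/2)[(S₁μ/R₁)(μf*²/2 + μf*g* + g*²/2)s′ − z(S₁g*²/2 + S₁μ(f*²/2 + f*g*))Γ*], b₂₃ = b₃₂ = −(1/2)[μ(f*²/2)s′ − zR₁(f*²/2)Γ*], b₃₃ = −z(μf* + g*)Γ*s′ + zD. Then there exist z > 0 and ε > 0 such that for every Γ* with 0 ≤ Γ* < ε the matrix b(z,Γ*) is positive definite. -/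
/-!
The leading 2×2 block of `b(z, Γ*)` does not depend on `z` or `Γ*` and has positive
determinant, so its quadratic form is bounded below by `λ |x|²` with `λ = det / trace`.
For `Γ* ≤ 1` and `z Γ* ≤ 1` the coupling entries `b₁₃, b₂₃` stay bounded independently of `z`
(since `σ'` is continuous), while `σ' ≤ 0` gives `b₃₃ ≥ z D`. Taking `z` large makes the
Schur-type condition `b₁₃² + b₂₃² < λ b₃₃` hold for all `Γ* < min 1 (1 / z)`.
-/

open Matrix

/-- `det / trace` is a lower bound for the smallest eigenvalue of `!![a, b; b, c]`. -/
theorem det_div_trace_mul_le_quadForm {a b c : ℝ} (hac : 0 < a + c) (x y : ℝ) :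
    (a * c - b ^ 2) / (a + c) * (x ^ 2 + y ^ 2) ≤ a * x ^ 2 + 2 * b * x * y + c * y ^ 2 := by
  rw [div_mul_eq_mul_div, div_le_iff₀ hac]
  nlinarith [sq_nonneg (a * x + b * y), sq_nonneg (b * x + c * y)]

theorem posDef_bordered_of_le_quadForm {a b c p q d lam : ℝ} (hlam : 0 < lam)
    (hQ : ∀ x y, lam * (x ^ 2 + y ^ 2) ≤ a * x ^ 2 + 2 * b * x * y + c * y ^ 2)
    (hd : p ^ 2 + q ^ 2 < lam * d) :
    (!![a, b, p; b, c, q; p, q, d] : Matrix (Fin 3) (Fin 3) ℝ).PosDef := by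
  refine posDef_iff_dotProduct_mulVec.mpr ⟨?_, fun v hv => ?_⟩
  · ext i j
    fin_cases i <;> fin_cases j <;> rfl
  have hform : star v ⬝ᵥ (!![a, b, p; b, c, q; p, q, d] *ᵥ v) =
      (a * v 0 ^ 2 + 2 * b * v 0 * v 1 + c * v 1 ^ 2) + 2 * v 2 * (p * v 0 + q * v 1)
        + d * v 2 ^ 2 := by
    simp only [dotProduct, Pi.star_apply, star_trivial, mulVec, of_apply, cons_val',
      cons_val_fin_one, Fin.sum_univ_three, cons_val_zero, cons_val_one, cons_val]
    ring
  have hsq : lam * (lam * (v 0 ^ 2 + v 1 ^ 2) + 2 * v 2 * (p * v 0 + q * v 1) + d * v 2 ^ 2) =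
      (lam * v 0 + p * v 2) ^ 2 + (lam * v 1 + q * v 2) ^ 2
        + (lam * d - (p ^ 2 + q ^ 2)) * v 2 ^ 2 := by ring
  have hpos : 0 < lam * (v 0 ^ 2 + v 1 ^ 2) + 2 * v 2 * (p * v 0 + q * v 1) + d * v 2 ^ 2 := by
    refine pos_of_mul_pos_right (hsq ▸ ?_) hlam.le
    by_cases h2 : v 2 = 0
    · have h01 : v 0 ≠ 0 ∨ v 1 ≠ 0 := by
        by_contra! h
        exact hv (by ext i; fin_cases i <;> simp [h.1, h.2, h2])
      simp only [h2, mul_zero, add_zero, zero_pow two_ne_zero]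
      rcases h01 with h | h <;> positivity
    · have : 0 < lam * d - (p ^ 2 + q ^ 2) := by linarith
      positivity
  rw [hform]
  linarith [hQ (v 0) (v 1)]

theorem sq_coupling_le {K L M s z Γ : ℝ} (hK : 0 ≤ K) (hL : 0 ≤ L) (hs : |s| ≤ M)
    (hz : 0 ≤ z) (hΓ : 0 ≤ Γ) (hzΓ : z * Γ ≤ 1) :
    (-(1 / 2) * (K * s - z * L * Γ)) ^ 2 ≤ (K * M + L) ^ 2 / 4 := by
  have hKs : |K * s| ≤ K * M := by
    rw [abs_mul, abs_of_nonneg hK]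
    exact mul_le_mul_of_nonneg_left hs hK
  have hzLΓ : z * L * Γ ≤ L := by
    rw [show z * L * Γ = L * (z * Γ) by ring]
    exact mul_le_of_le_one_right hL hzΓ
  have h : |-(1 / 2) * (K * s - z * L * Γ)| ≤ (K * M + L) / 2 := by
    have : 0 ≤ z * L * Γ := by positivity
    rw [abs_le] at hKs ⊢
    constructor <;> linarith
  calc (-(1 / 2) * (K * s - z * L * Γ)) ^ 2 = |-(1 / 2) * (K * s - z * L * Γ)| ^ 2 :=
        (sq_abs _).symm
    _ ≤ ((K * M + L) / 2) ^ 2 := by gcongr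
    _ = (K * M + L) ^ 2 / 4 := by ring

/-- Key step in the proof of Lemma 3.5 of the paper: the symmetrization `b_G^z(u*)` of
the transformed diffusion matrix of the gravity-driven system linearized at the
constant steady state `u* = (f*,g*,Γ*)` is positive definite for a suitable weight
`z > 0`, provided the surfactant concentration `Γ*` is small enough. -/
theorem symmetrized_matrix_posDef
    (μ D R₁ S₁ fs gs : ℝ)
    (hμ : 0 < μ) (hD : 0 < D) (hR₁ : 0 < R₁) (hS₁ : 0 < S₁)
    (hfs : 0 < fs) (hgs : 0 < gs)
    (σ : ℝ → ℝ) (hσ : ContDiff ℝ 2 σ) (hσ' : ∀ s : ℝ, 0 ≤ s → deriv σ s ≤ 0) :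
    ∃ z : ℝ, 0 < z ∧ ∃ ε : ℝ, 0 < ε ∧ ∀ Γs : ℝ, 0 ≤ Γs → Γs < ε →
      (!![S₁ * μ / R₁ * (S₁ * gs ^ 3 / 3 + S₁ * μ * (fs ^ 3 / 3 + fs ^ 2 * gs + fs * gs ^ 2)),
          S₁ * μ * (fs ^ 3 / 3 + fs ^ 2 * gs / 2),
          -(1 / 2) * (S₁ * μ / R₁ * (μ * fs ^ 2 / 2 + μ * fs * gs + gs ^ 2 / 2) * deriv σ Γs
            - z * (S₁ * gs ^ 2 / 2 + S₁ * μ * (fs ^ 2 / 2 + fs * gs)) * Γs);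
         S₁ * μ * (fs ^ 3 / 3 + fs ^ 2 * gs / 2),
          R₁ * fs ^ 3 / 3,
          -(1 / 2) * (μ * (fs ^ 2 / 2) * deriv σ Γs - z * R₁ * (fs ^ 2 / 2) * Γs);
         -(1 / 2) * (S₁ * μ / R₁ * (μ * fs ^ 2 / 2 + μ * fs * gs + gs ^ 2 / 2) * deriv σ Γs
            - z * (S₁ * gs ^ 2 / 2 + S₁ * μ * (fs ^ 2 / 2 + fs * gs)) * Γs),
          -(1 / 2) * (μ * (fs ^ 2 / 2) * deriv σ Γs - z * R₁ * (fs ^ 2 / 2) * Γs),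
          -z * (μ * fs + gs) * Γs * deriv σ Γs + z * D] :
        Matrix (Fin 3) (Fin 3) ℝ).PosDef := by
  obtain ⟨M, hM⟩ : ∃ M, ∀ t ∈ Set.Icc (0 : ℝ) 1, ‖deriv σ t‖ ≤ M :=
    isCompact_Icc.exists_bound_of_continuousOn (hσ.continuous_deriv (by norm_num)).continuousOn
  set a := S₁ * μ / R₁ * (S₁ * gs ^ 3 / 3 + S₁ * μ * (fs ^ 3 / 3 + fs ^ 2 * gs + fs * gs ^ 2))
  set b := S₁ * μ * (fs ^ 3 / 3 + fs ^ 2 * gs / 2)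
  set c := R₁ * fs ^ 3 / 3
  have hac : 0 < a + c := by positivity
  have hdet : a * c - b ^ 2 =
      S₁ ^ 2 * μ * fs ^ 3 * gs ^ 3 / 9 + S₁ ^ 2 * μ ^ 2 * fs ^ 4 * gs ^ 2 / 12 := by
    simp only [a, b, c]
    field_simp
    ring
  set lam := (a * c - b ^ 2) / (a + c)
  have hlam : 0 < lam := div_pos (hdet ▸ by positivity) hac
  set K₁ := S₁ * μ / R₁ * (μ * fs ^ 2 / 2 + μ * fs * gs + gs ^ 2 / 2)
  set L₁ := S₁ * gs ^ 2 / 2 + S₁ * μ * (fs ^ 2 / 2 + fs * gs)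
  set K₂ := μ * (fs ^ 2 / 2)
  set L₂ := R₁ * (fs ^ 2 / 2)
  set C := ((K₁ * M + L₁) ^ 2 + (K₂ * M + L₂) ^ 2) / 4
  set z := (C + 1) / (lam * D)
  have hz : 0 < z := by positivity
  refine ⟨z, hz, min 1 (1 / z), by positivity, fun Γ hΓ0 hΓε => ?_⟩
  refine posDef_bordered_of_le_quadForm hlam (det_div_trace_mul_le_quadForm hac) ?_
  have hzΓ : z * Γ ≤ 1 := ((lt_div_iff₀' hz).mp (hΓε.trans_le (min_le_right _ _))).le
  have hs : |deriv σ Γ| ≤ M := hM Γ ⟨hΓ0, (hΓε.trans_le (min_le_left _ _)).le⟩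
  have hc₁ := sq_coupling_le (K := K₁) (L := L₁) (by positivity) (by positivity) hs hz.le hΓ0 hzΓ
  have hc₂ := sq_coupling_le (K := K₂) (L := L₂) (by positivity) (by positivity) hs hz.le hΓ0 hzΓ
  have hd : z * D ≤ -z * (μ * fs + gs) * Γ * deriv σ Γ + z * D := by
    have := mul_nonneg (mul_nonneg (mul_nonneg hz.le (by positivity : 0 ≤ μ * fs + gs)) hΓ0)
      (neg_nonneg.mpr (hσ' Γ hΓ0))
    linarith
  have hzD : lam * (z * D) = C + 1 := by
    simp only [z]
    field_simp
  calc _ ≤ C := by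
        rw [show z * R₁ * (fs ^ 2 / 2) * Γ = z * L₂ * Γ by ring]
        simp only [C]
        linarith
    _ < lam * (z * D) := by linarith
    _ ≤ _ := by gcongr
end

section
/- Let λ ∈ ℂ with Re λ ≥ 0 and λ ≠ 0, and let a¹¹, a¹², a²¹, a²² ∈ ℝ with a¹² ≠ 0. Assume that the quadratic polynomial E² + (a¹¹ + a²²)E + (a¹¹a²² − a¹²a²¹) has two distinct real roots E₊, E₋ with E₊ < 0 and E₋ < 0. Suppose u₁, u₂ : [0,∞) → ℂ are smooth and satisfy the ordinary differential system λa¹¹u₁(t) + λa¹²u₂(t) + u₁⁗(t) = 0 and λa²¹u₁(t) + λa²²u₂(t) + u₂⁗(t) = 0 for t > 0, the boundary conditions u₁′(0) = u₂′(0) = u₁‴(0) = u₂‴(0) = 0, and are exponentially decaying, i.e. there exist C, ω > 0 with |u₁(t)| + |u₂(t)| ≤ C e^{−ωt} for all t ≥ 0. Then u₁ ≡ 0 and u₂ ≡ 0. -/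
open Filter Set Complex

/-- exponential decay of `exp (r t)` when `Re r < 0`. -/
lemma LS_exp_tendsto {r : ℂ} (hr : r.re < 0) :
    Tendsto (fun t : ℝ => Complex.exp (r * t)) atTop (nhds 0) := by
  have h1 : Tendsto (fun t : ℝ => Real.exp (r.re * t)) atTop (nhds 0) :=
    Real.tendsto_exp_atBot.comp ((tendsto_id (α := ℝ)).const_mul_atTop_of_neg hr)
  apply squeeze_zero_norm _ h1
  intro t
  rw [Complex.norm_exp]
  apply le_of_eq
  congr 1
  simp [Complex.mul_re]

/-- constancy on `Ici 0` from vanishing derivative. -/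
lemma LS_const {F : ℝ → ℂ} (h : ∀ t ∈ Ici (0:ℝ), HasDerivAt F 0 t) :
    ∀ t ∈ Ici (0:ℝ), F t = F 0 := by
  intro t ht
  have := constant_of_has_deriv_right_zero (f := F) (a := 0) (b := t)
    (fun x hx => (h x hx.1).continuousAt.continuousWithinAt)
    (fun x hx => (h x hx.1).hasDerivWithinAt)
  exact this t ⟨ht, le_rfl⟩

lemma LS_hasDerivAt_exp (a : ℂ) (t : ℝ) :
    HasDerivAt (fun s : ℝ => Complex.exp (a * s)) (a * Complex.exp (a * t)) t := by
  have h1 : HasDerivAt (fun s : ℝ => a * (s : ℂ)) a t := by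
    simpa using (Complex.ofRealCLM.hasDerivAt (x := t)).const_mul a
  simpa [mul_comm] using h1.cexp

lemma LS_solve1 {a : ℂ} {φ : ℝ → ℂ}
    (h : ∀ t ∈ Ici (0:ℝ), HasDerivAt φ (a * φ t) t) :
    ∀ t ∈ Ici (0:ℝ), φ t = φ 0 * Complex.exp (a * t) := by
  have hc : ∀ t ∈ Ici (0:ℝ),
      Complex.exp (-a * t) * φ t = Complex.exp (-a * 0) * φ 0 := by
    apply LS_const
    intro t ht
    have := (LS_hasDerivAt_exp (-a) t).mul (h t ht)
    refine this.congr_deriv ?_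
    ring
  intro t ht
  have h2 := hc t ht
  have e1 : Complex.exp (-a * (t:ℂ)) * Complex.exp (a * t) = 1 := by
    rw [← Complex.exp_add]
    ring_nf
    exact Complex.exp_zero
  simp only [mul_zero, Complex.exp_zero, one_mul] at h2
  calc φ t = (Complex.exp (-a * t) * φ t) * Complex.exp (a * t) := by
        rw [mul_comm (Complex.exp (-a * (t:ℂ))) (φ t), mul_assoc, e1, mul_one]
    _ = φ 0 * Complex.exp (a * t) := by rw [h2]

lemma LS_solve2 {a b c : ℂ} {ψ : ℝ → ℂ} (hab : b ≠ a)
    (h : ∀ t ∈ Ici (0:ℝ), HasDerivAt ψ (a * ψ t + c * Complex.exp (b * t)) t) :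
    ∀ t ∈ Ici (0:ℝ), ψ t =
      (ψ 0 - c / (b - a)) * Complex.exp (a * t) + (c / (b - a)) * Complex.exp (b * t) := by
  have hba : b - a ≠ 0 := sub_ne_zero.mpr hab
  set k : ℂ := c / (b - a) with hk
  have hkc : k * (b - a) = c := by rw [hk, div_mul_cancel₀ _ hba]
  have hc : ∀ t ∈ Ici (0:ℝ),
      Complex.exp (-a * t) * ψ t - k * Complex.exp ((b - a) * t)
        = Complex.exp (-a * 0) * ψ 0 - k * Complex.exp ((b - a) * 0) := by
    apply LS_const
    intro t ht
    have hd := ((LS_hasDerivAt_exp (-a) t).mul (h t ht)).sub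
      ((LS_hasDerivAt_exp (b - a) t).const_mul k)
    refine hd.congr_deriv ?_
    have e2 : Complex.exp (-a * (t:ℂ)) * Complex.exp (b * t)
        = Complex.exp ((b - a) * t) := by
      rw [← Complex.exp_add]; congr 1; ring
    linear_combination (c : ℂ) * e2 - Complex.exp ((b-a)*(t:ℂ)) * hkc
  intro t ht
  have h2 := hc t ht
  simp only [mul_zero, Complex.exp_zero, one_mul, mul_one] at h2
  have e1 : Complex.exp (-a * (t:ℂ)) * Complex.exp (a * t) = 1 := by
    rw [← Complex.exp_add]; ring_nf; exact Complex.exp_zero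
  have e3 : Complex.exp ((b - a) * (t:ℂ)) * Complex.exp (a * t)
      = Complex.exp (b * t) := by
    rw [← Complex.exp_add]; congr 1; ring
  calc ψ t = (Complex.exp (-a * t) * ψ t) * Complex.exp (a * t) := by
        rw [mul_comm (Complex.exp (-a * (t:ℂ))) (ψ t), mul_assoc, e1, mul_one]
    _ = _ := by
        rw [show Complex.exp (-a * (t:ℂ)) * ψ t
            = (ψ 0 - k) + k * Complex.exp ((b - a) * t) by linear_combination h2]
        rw [add_mul, mul_assoc, e3]

lemma LS_cosh_sol {r : ℂ} (hr : r ≠ 0) {ψ ψ' : ℝ → ℂ}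
    (hd : ∀ t ∈ Ici (0:ℝ), HasDerivAt ψ (ψ' t) t)
    (hd2 : ∀ t ∈ Ici (0:ℝ), HasDerivAt ψ' (r ^ 2 * ψ t) t)
    (h0 : ψ' 0 = 0) :
    ∀ t ∈ Ici (0:ℝ), ψ t = ψ 0 / 2 * (Complex.exp (r * t) + Complex.exp (-r * t)) := by
  set φ : ℝ → ℂ := fun t => ψ' t - r * ψ t with hφ
  have hφd : ∀ t ∈ Ici (0:ℝ), HasDerivAt φ ((-r) * φ t) t := by
    intro t ht
    have := (hd2 t ht).sub ((hd t ht).const_mul r)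
    refine this.congr_deriv ?_
    simp only [hφ]; ring
  have hφsol := LS_solve1 hφd
  have hφ0 : φ 0 = -(r * ψ 0) := by simp [hφ, h0]
  have hψd : ∀ t ∈ Ici (0:ℝ),
      HasDerivAt ψ (r * ψ t + (-(r * ψ 0)) * Complex.exp ((-r) * t)) t := by
    intro t ht
    have h1 := hd t ht
    have h2 : ψ' t = r * ψ t + (-(r * ψ 0)) * Complex.exp ((-r) * t) := by
      have h3 := hφsol t ht
      rw [hφ0] at h3
      simp only [hφ] at h3
      linear_combination h3
    rwa [h2] at h1
  have hab : (-r) ≠ r := by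
    intro h; apply hr; have : (2:ℂ) * r = 0 := by linear_combination -h
    simpa using this
  have hsol := LS_solve2 hab hψd
  have hk : (-(r * ψ 0)) / ((-r) - r) = ψ 0 / 2 := by
    rw [show (-r) - r = (-2) * r by ring]
    rw [div_mul_eq_div_div_swap]
    field_simp
  intro t ht
  have h4 := hsol t ht
  rw [hk] at h4
  rw [h4]; ring

lemma LS_growth_aux {p q a b : ℂ} (hp : 0 < p.re) (hq : 0 < q.re) (hpq : p ≠ q)
    (hle : p.re ≤ q.re)
    (h : Tendsto (fun t : ℝ => a * Complex.exp (p * t) + b * Complex.exp (q * t))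
      atTop (nhds 0)) : a = 0 ∧ b = 0 := by
  set d : ℂ := q - p with hd
  have hd0 : d ≠ 0 := sub_ne_zero.mpr (Ne.symm hpq)
  -- multiply by exp(-p t)
  have h1 : Tendsto (fun t : ℝ => Complex.exp (-p * t) *
      (a * Complex.exp (p * t) + b * Complex.exp (q * t))) atTop (nhds 0) := by
    have := (LS_exp_tendsto (r := -p) (by simpa using hp)).mul h
    simpa using this
  have h2 : Tendsto (fun t : ℝ => a + b * Complex.exp (d * t)) atTop (nhds 0) := by
    apply h1.congr
    intro t
    have e1 : Complex.exp (-p * (t:ℂ)) * Complex.exp (p * t) = 1 := by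
      rw [← Complex.exp_add]; ring_nf; exact Complex.exp_zero
    have e2 : Complex.exp (-p * (t:ℂ)) * Complex.exp (q * t)
        = Complex.exp (d * t) := by
      rw [← Complex.exp_add]; congr 1; simp only [hd]; ring
    calc Complex.exp (-p * (t:ℂ)) * (a * Complex.exp (p * t) + b * Complex.exp (q * t))
        = a * (Complex.exp (-p * (t:ℂ)) * Complex.exp (p * t))
          + b * (Complex.exp (-p * (t:ℂ)) * Complex.exp (q * t)) := by ring
      _ = a + b * Complex.exp (d * t) := by rw [e1, e2]; ring
  have h3 : Tendsto (fun t : ℝ => b * Complex.exp (d * t)) atTop (nhds (-a)) := by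
    have := h2.sub (tendsto_const_nhds (x := a))
    simpa using this
  by_cases hb : b = 0
  · subst hb
    have ha : a = 0 := by simpa using h3
    exact ⟨ha, rfl⟩
  · exfalso
    have hdre0 : 0 ≤ d.re := by simp only [hd, Complex.sub_re]; linarith
    rcases lt_or_eq_of_le hdre0 with hdre | hdre
    · -- growing modulus, contradiction
      have hnorm : Tendsto (fun t : ℝ => ‖b * Complex.exp (d * t)‖) atTop atTop := by
        have : (fun t : ℝ => ‖b * Complex.exp (d * t)‖)
            = fun t : ℝ => ‖b‖ * Real.exp (d.re * t) := by
          funext t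
          rw [norm_mul, Complex.norm_exp]
          congr 2
          simp [Complex.mul_re]
        rw [this]
        exact (Real.tendsto_exp_atTop.comp
          ((tendsto_id (α := ℝ)).const_mul_atTop hdre)).const_mul_atTop
          (norm_pos_iff.mpr hb)
      exact not_tendsto_nhds_of_tendsto_atTop hnorm _ h3.norm
    · -- purely imaginary d
      have hβ : d.im ≠ 0 := by
        intro h0
        exact hd0 (Complex.ext (by simp [← hdre]) h0)
      -- shift by π / d.im
      have hshift : Tendsto (fun t : ℝ => t + Real.pi / d.im) atTop atTop :=
        tendsto_atTop_add_const_right atTop _ tendsto_id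
      have h5 : Tendsto (fun t : ℝ => -(b * Complex.exp (d * t))) atTop (nhds (-a)) := by
        apply (h3.comp hshift).congr
        intro t
        show b * Complex.exp (d * ((t + Real.pi / d.im : ℝ) : ℂ))
            = -(b * Complex.exp (d * t))
        have hdI : d = (d.im : ℂ) * Complex.I := by
          apply Complex.ext <;> simp [← hdre]
        have e4 : Complex.exp (d * ((t + Real.pi / d.im : ℝ) : ℂ))
            = Complex.exp (d * t) * Complex.exp (Real.pi * Complex.I) := by
          rw [← Complex.exp_add]
          congr 1
          push_cast
          rw [hdI]
          have hβC : (d.im : ℂ) ≠ 0 := by exact_mod_cast hβ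
          simp only [Complex.mul_im, Complex.ofReal_re, Complex.ofReal_im, Complex.I_re, Complex.I_im, mul_zero, mul_one, zero_mul, add_zero]
          field_simp
        rw [e4, Complex.exp_pi_mul_I]
        ring
      have h7 : Tendsto (fun t : ℝ => b * Complex.exp (d * t)) atTop (nhds a) := by
        have := h5.neg
        simpa using this
      have ha : a = -a := tendsto_nhds_unique h7 h3
      have ha0 : a = 0 := by
        have : (2:ℂ) * a = 0 := by linear_combination ha
        simpa using this
      -- now b exp(dt) → 0 but has constant modulus ‖b‖
      rw [ha0, neg_zero] at h3
      have h8 : Tendsto (fun t : ℝ => ‖b * Complex.exp (d * t)‖) atTop (nhds ‖b‖) := by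
        have : (fun t : ℝ => ‖b * Complex.exp (d * t)‖) = fun _ : ℝ => ‖b‖ := by
          funext t
          rw [norm_mul, Complex.norm_exp]
          have : (d * (t:ℂ)).re = 0 := by simp [Complex.mul_re, ← hdre]
          rw [this, Real.exp_zero, mul_one]
        rw [this]; exact tendsto_const_nhds
      have : ‖b‖ = 0 := tendsto_nhds_unique h8 (by simpa using h3.norm)
      exact hb (norm_eq_zero.mp this)

lemma LS_growth {p q a b : ℂ} (hp : 0 < p.re) (hq : 0 < q.re) (hpq : p ≠ q)
    (h : Tendsto (fun t : ℝ => a * Complex.exp (p * t) + b * Complex.exp (q * t))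
      atTop (nhds 0)) : a = 0 ∧ b = 0 := by
  rcases le_total p.re q.re with hle | hle
  · exact LS_growth_aux hp hq hpq hle h
  · have h' : Tendsto (fun t : ℝ => b * Complex.exp (q * t) + a * Complex.exp (p * t))
        atTop (nhds 0) := by
      apply h.congr; intro t; ring
    obtain ⟨hb, ha⟩ := LS_growth_aux hq hp (Ne.symm hpq) hle h'
    exact ⟨ha, hb⟩

lemma LS_roots {lam : ℂ} (hre : 0 ≤ lam.re) (hlam : lam ≠ 0) {μ : ℝ} (hμ : 0 < μ) :
    ∃ r₁ r₂ : ℂ, r₁.re < 0 ∧ r₂.re < 0 ∧ r₁ ≠ r₂ ∧ r₁ ^ 2 + r₂ ^ 2 = 0 ∧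
      r₁ ≠ 0 ∧ r₁ ^ 2 * r₂ ^ 2 = lam * μ := by
  set c : ℂ := lam * μ with hc
  have hc0 : c ≠ 0 := mul_ne_zero hlam (by exact_mod_cast hμ.ne')
  set s : ℂ := (-c) ^ (((4 : ℕ) : ℂ))⁻¹ with hs
  have hs4 : s ^ (4 : ℕ) = -c := Complex.cpow_nat_inv_pow _ (by norm_num)
  have hs0 : s ≠ 0 := by
    intro h0
    rw [h0] at hs4
    simp at hs4
    exact hc0 hs4
  have key : ∀ x : ℝ, x ≠ 0 → s ^ (4:ℕ) ≠ ((x ^ (4:ℕ) : ℝ) : ℂ) := by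
    intro x hx h4
    have hx4 : (0:ℝ) < x ^ (4:ℕ) := by positivity
    have hlameq : lam = ((-(x ^ (4:ℕ)) / μ : ℝ) : ℂ) := by
      have h5 : -c = ((x ^ (4:ℕ) : ℝ) : ℂ) := by rw [← hs4, h4]
      rw [hc] at h5
      have hμC : (μ:ℂ) ≠ 0 := by exact_mod_cast hμ.ne'
      push_cast
      field_simp [hμC]
      push_cast at h5
      linear_combination -h5
    have : lam.re = -(x ^ (4:ℕ)) / μ := by rw [hlameq, Complex.ofReal_re]
    rw [this] at hre
    have : -(x ^ (4:ℕ)) / μ < 0 := div_neg_of_neg_of_pos (by linarith) hμ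
    linarith
  have hsre : s.re ≠ 0 := by
    intro h0
    have him : s.im ≠ 0 := by
      intro h1; exact hs0 (Complex.ext h0 h1)
    have hseq : s = (s.im : ℂ) * Complex.I := by
      apply Complex.ext <;> simp [h0]
    have h4 : s ^ (4:ℕ) = ((s.im ^ (4:ℕ) : ℝ) : ℂ) := by
      conv_lhs => rw [hseq]
      rw [mul_pow]
      rw [show (Complex.I) ^ (4:ℕ) = 1 by
        rw [show (4:ℕ) = 2 * 2 by norm_num, pow_mul, Complex.I_sq]; norm_num]
      push_cast
      ring
    exact key s.im him h4
  have hsim : s.im ≠ 0 := by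
    intro h0
    have hseq : s = ((s.re : ℝ) : ℂ) := by
      apply Complex.ext <;> simp [h0]
    have h4 : s ^ (4:ℕ) = ((s.re ^ (4:ℕ) : ℝ) : ℂ) := by
      conv_lhs => rw [hseq]
      push_cast
      ring
    exact key s.re hsre h4
  set r₁ : ℂ := if s.re < 0 then s else -s with hr₁
  have hr₁re : r₁.re < 0 := by
    rw [hr₁]
    split_ifs with h
    · exact h
    · simp only [Complex.neg_re]
      rcases lt_or_gt_of_ne hsre with h1 | h1
      · exact absurd h1 h
      · linarith
  have hr₁im : r₁.im ≠ 0 := by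
    rw [hr₁]; split_ifs <;> simpa using hsim
  have hr₁4 : r₁ ^ (4:ℕ) = s ^ (4:ℕ) := by
    rw [hr₁]; split_ifs
    · rfl
    · ring
  have hr₁0 : r₁ ≠ 0 := by
    intro h; rw [h] at hr₁re; simp at hr₁re
  set r₂ : ℂ := if (Complex.I * r₁).re < 0 then Complex.I * r₁ else -(Complex.I * r₁)
    with hr₂
  have hIr : (Complex.I * r₁).re = -r₁.im := by simp [Complex.mul_re]
  have hIrne : (Complex.I * r₁).re ≠ 0 := by rw [hIr]; simpa using hr₁im
  have hr₂re : r₂.re < 0 := by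
    rw [hr₂]
    split_ifs with h
    · exact h
    · rw [Complex.neg_re]
      rcases lt_or_gt_of_ne hIrne with h1 | h1
      · exact absurd h1 h
      · linarith
  have hsq : ∀ z : ℂ, (Complex.I * z) ^ 2 = -(z ^ 2) := fun z => by
    rw [mul_pow, Complex.I_sq]; ring
  have hr₂sq : r₂ ^ 2 = -(r₁ ^ 2) := by
    rw [hr₂]; split_ifs with h
    · exact hsq r₁
    · rw [neg_sq]; exact hsq r₁
  refine ⟨r₁, r₂, hr₁re, hr₂re, ?_, by rw [hr₂sq]; ring, hr₁0, ?_⟩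
  · intro h
    have h1 : r₁ ^ 2 = -(r₁ ^ 2) := by rw [← hr₂sq, h]
    have h2 : (2:ℂ) * r₁ ^ 2 = 0 := by linear_combination h1
    have h3 : r₁ ^ 2 = 0 := by
      have := mul_eq_zero.mp h2
      simpa using this
    exact hr₁0 (pow_eq_zero_iff (by norm_num) |>.mp h3)
  · rw [hr₂sq]
    have : r₁ ^ 2 * -(r₁ ^ 2) = -(r₁ ^ (4:ℕ)) := by ring
    rw [this, hr₁4, hs4, hc]
    ring

lemma LS_hasDerivAt_iter {w : ℝ → ℂ} (hw : ContDiff ℝ (⊤ : ℕ∞) w) (n : ℕ) (t : ℝ) :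
    HasDerivAt (iteratedDeriv n w) (iteratedDeriv (n + 1) w t) t := by
  have hd : Differentiable ℝ (iteratedDeriv n w) :=
    hw.differentiable_iteratedDeriv n (by exact_mod_cast lt_top_iff_ne_top.mpr (by simp))
  rw [iteratedDeriv_succ]
  exact (hd t).hasDerivAt

lemma LS_scalar {r₁ r₂ : ℂ} (h1 : r₁.re < 0) (h2 : r₂.re < 0) (hne : r₁ ≠ r₂)
    (hsum : r₁ ^ 2 + r₂ ^ 2 = 0) (hr₁0 : r₁ ≠ 0)
    {w : ℝ → ℂ} (hw : ContDiff ℝ (⊤ : ℕ∞) w)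
    (hode : ∀ t ∈ Ici (0:ℝ), iteratedDeriv 4 w t = -(r₁ ^ 2 * r₂ ^ 2) * w t)
    (hbc1 : deriv w 0 = 0) (hbc3 : iteratedDeriv 3 w 0 = 0)
    (hlim : Tendsto w atTop (nhds 0)) :
    ∀ t ∈ Ici (0:ℝ), w t = 0 := by
  have hr₂0 : r₂ ≠ 0 := by
    intro h; rw [h] at hsum; simp at hsum
    exact hr₁0 hsum
  have hd0 : ∀ t : ℝ, HasDerivAt w (deriv w t) t := by
    intro t
    have := LS_hasDerivAt_iter hw 0 t
    simpa [iteratedDeriv_one] using this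
  -- the two second-order quantities
  set ψ : ℝ → ℂ := fun t => iteratedDeriv 2 w t - r₂ ^ 2 * w t with hψ
  set ψ' : ℝ → ℂ := fun t => iteratedDeriv 3 w t - r₂ ^ 2 * deriv w t with hψ'
  set χ : ℝ → ℂ := fun t => iteratedDeriv 2 w t - r₁ ^ 2 * w t with hχ
  set χ' : ℝ → ℂ := fun t => iteratedDeriv 3 w t - r₁ ^ 2 * deriv w t with hχ'
  have hdψ : ∀ t ∈ Ici (0:ℝ), HasDerivAt ψ (ψ' t) t := by
    intro t _
    have := (LS_hasDerivAt_iter hw 2 t).sub ((hd0 t).const_mul (r₂ ^ 2))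
    exact this
  have hdχ : ∀ t ∈ Ici (0:ℝ), HasDerivAt χ (χ' t) t := by
    intro t _
    have := (LS_hasDerivAt_iter hw 2 t).sub ((hd0 t).const_mul (r₁ ^ 2))
    exact this
  have hd1 : ∀ t : ℝ, HasDerivAt (deriv w) (iteratedDeriv 2 w t) t := by
    intro t
    have := LS_hasDerivAt_iter hw 1 t
    simpa [iteratedDeriv_one] using this
  have hdψ' : ∀ t ∈ Ici (0:ℝ), HasDerivAt ψ' (r₁ ^ 2 * ψ t) t := by
    intro t ht
    have hder := (LS_hasDerivAt_iter hw 3 t).sub ((hd1 t).const_mul (r₂ ^ 2))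
    have heq : iteratedDeriv 4 w t - r₂ ^ 2 * iteratedDeriv 2 w t
        = r₁ ^ 2 * ψ t := by
      rw [hode t ht, hψ]
      linear_combination (-(iteratedDeriv 2 w t)) * hsum
    rwa [heq] at hder
  have hdχ' : ∀ t ∈ Ici (0:ℝ), HasDerivAt χ' (r₂ ^ 2 * χ t) t := by
    intro t ht
    have hder := (LS_hasDerivAt_iter hw 3 t).sub ((hd1 t).const_mul (r₁ ^ 2))
    have heq : iteratedDeriv 4 w t - r₁ ^ 2 * iteratedDeriv 2 w t
        = r₂ ^ 2 * χ t := by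
      rw [hode t ht, hχ]
      linear_combination (-(iteratedDeriv 2 w t)) * hsum
    rwa [heq] at hder
  have hψ'0 : ψ' 0 = 0 := by simp [hψ', hbc1, hbc3]
  have hχ'0 : χ' 0 = 0 := by simp [hχ', hbc1, hbc3]
  have hψsol := LS_cosh_sol hr₁0 hdψ hdψ' hψ'0
  have hχsol := LS_cosh_sol hr₂0 hdχ hdχ' hχ'0
  -- w in terms of exponentials
  have hdiff : r₁ ^ 2 - r₂ ^ 2 ≠ 0 := by
    intro h
    have : (2:ℂ) * r₁ ^ 2 = 0 := by linear_combination h + hsum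
    have h3 : r₁ ^ 2 = 0 := by simpa using mul_eq_zero.mp this
    exact hr₁0 (pow_eq_zero_iff (by norm_num) |>.mp h3)
  have hwform : ∀ t ∈ Ici (0:ℝ), (r₁ ^ 2 - r₂ ^ 2) * w t
      = ψ 0 / 2 * (Complex.exp (r₁ * t) + Complex.exp (-r₁ * t))
        - χ 0 / 2 * (Complex.exp (r₂ * t) + Complex.exp (-r₂ * t)) := by
    intro t ht
    rw [← hχsol t ht, ← hψsol t ht, hχ, hψ]
    ring
  -- decay forces the growing coefficients to vanish
  have hglim : Tendsto (fun t : ℝ => (ψ 0 / 2) * Complex.exp ((-r₁) * t)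
      + (-(χ 0 / 2)) * Complex.exp ((-r₂) * t)) atTop (nhds 0) := by
    have hrhs : Tendsto (fun t : ℝ => (r₁ ^ 2 - r₂ ^ 2) * w t
        - ψ 0 / 2 * Complex.exp (r₁ * t) + χ 0 / 2 * Complex.exp (r₂ * t))
        atTop (nhds 0) := by
      have t1 := hlim.const_mul (r₁ ^ 2 - r₂ ^ 2)
      have t2 := (LS_exp_tendsto h1).const_mul (ψ 0 / 2)
      have t3 := (LS_exp_tendsto h2).const_mul (χ 0 / 2)
      have := (t1.sub t2).add t3
      simpa using this
    apply hrhs.congr'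
    filter_upwards [eventually_ge_atTop (0:ℝ)] with t ht
    have h5 := hwform t ht
    linear_combination h5
  have hgrow := LS_growth (p := -r₁) (q := -r₂)
    (by simpa using h1) (by simpa using h2)
    (by intro h; exact hne (by linear_combination -h)) hglim
  have hψ0 : ψ 0 = 0 := by
    have h6 := hgrow.1
    field_simp at h6
    simpa using h6
  have hχ0 : χ 0 = 0 := by
    have h6 := hgrow.2
    have h7 : χ 0 / 2 = 0 := by linear_combination -h6
    field_simp at h7
    simpa using h7
  intro t ht
  have h7 := hwform t ht
  rw [hψ0, hχ0] at h7
  simp at h7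
  rcases h7 with h7 | h7
  · exact absurd h7 hdiff
  · exact h7

lemma LS_iteratedDeriv_comb {f g : ℝ → ℂ} (hf : ContDiff ℝ (⊤ : ℕ∞) f) (hg : ContDiff ℝ (⊤ : ℕ∞) g)
    (c d : ℂ) (n : ℕ) :
    iteratedDeriv n (fun t => c * f t + d * g t)
      = fun t => c * iteratedDeriv n f t + d * iteratedDeriv n g t := by
  induction n with
  | zero => simp
  | succ n ih =>
    rw [iteratedDeriv_succ, ih, iteratedDeriv_succ, iteratedDeriv_succ]
    funext t
    have hdf : DifferentiableAt ℝ (iteratedDeriv n f) t :=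
      (LS_hasDerivAt_iter hf n t).differentiableAt
    have hdg : DifferentiableAt ℝ (iteratedDeriv n g) t :=
      (LS_hasDerivAt_iter hg n t).differentiableAt
    rw [deriv_fun_add (hdf.const_mul c) (hdg.const_mul d),
      deriv_const_mul c hdf, deriv_const_mul d hdg]

lemma LS_combo_zero
    (lam : ℂ) (hre : 0 ≤ lam.re) (hlam : lam ≠ 0)
    (a11 a12 a21 a22 : ℝ)
    {μ : ℝ} (hμ : 0 < μ)
    (hμroot : μ ^ 2 - (a11 + a22) * μ + (a11 * a22 - a12 * a21) = 0)
    (u₁ u₂ : ℝ → ℂ) (hu₁ : ContDiff ℝ (⊤ : ℕ∞) u₁) (hu₂ : ContDiff ℝ (⊤ : ℕ∞) u₂)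
    (hode₁ : ∀ t : ℝ, 0 < t →
      lam * (a11 : ℂ) * u₁ t + lam * (a12 : ℂ) * u₂ t + iteratedDeriv 4 u₁ t = 0)
    (hode₂ : ∀ t : ℝ, 0 < t →
      lam * (a21 : ℂ) * u₁ t + lam * (a22 : ℂ) * u₂ t + iteratedDeriv 4 u₂ t = 0)
    (hbc₁ : deriv u₁ 0 = 0) (hbc₂ : deriv u₂ 0 = 0)
    (hbc₃ : iteratedDeriv 3 u₁ 0 = 0) (hbc₄ : iteratedDeriv 3 u₂ 0 = 0)
    (hl₁ : Tendsto u₁ atTop (nhds 0)) (hl₂ : Tendsto u₂ atTop (nhds 0)) :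
    ∀ t ∈ Ici (0:ℝ), ((μ - a22 : ℝ) : ℂ) * u₁ t + ((a12 : ℝ) : ℂ) * u₂ t = 0 := by
  set k₁ : ℂ := ((μ - a22 : ℝ) : ℂ) with hk₁
  set k₂ : ℂ := ((a12 : ℝ) : ℂ) with hk₂
  set w : ℝ → ℂ := fun t => k₁ * u₁ t + k₂ * u₂ t with hwdef
  have hw : ContDiff ℝ (⊤ : ℕ∞) w := (contDiff_const.mul hu₁).add (contDiff_const.mul hu₂)
  have hcomb := LS_iteratedDeriv_comb hu₁ hu₂ k₁ k₂
  have hμrootC : (μ:ℂ) ^ 2 - ((a11:ℂ) + a22) * μ + ((a11:ℂ) * a22 - a12 * a21) = 0 := by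
    have := congrArg (fun x : ℝ => (x : ℂ)) hμroot
    push_cast at this
    simpa using this
  -- the ODE for w on Ioi 0
  have hodeIoi : ∀ t ∈ Ioi (0:ℝ), iteratedDeriv 4 w t = -(lam * μ) * w t := by
    intro t ht
    have e1 : iteratedDeriv 4 w t = k₁ * iteratedDeriv 4 u₁ t + k₂ * iteratedDeriv 4 u₂ t := by
      rw [hwdef, hcomb 4]
    rw [e1, hwdef]
    have o1 := hode₁ t ht
    have o2 := hode₂ t ht
    rw [hk₁, hk₂]
    push_cast
    linear_combination (((μ:ℂ) - a22)) * o1 + ((a12:ℂ)) * o2 + lam * u₁ t * hμrootC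
  -- extend to Ici 0 by continuity
  have hodeIci : ∀ t ∈ Ici (0:ℝ), iteratedDeriv 4 w t = -(lam * μ) * w t := by
    have hcont1 : Continuous (iteratedDeriv 4 w) := hw.continuous_iteratedDeriv 4 (by simpa using (WithTop.coe_le_coe.mpr (le_top : (4 : ℕ∞) ≤ ⊤)))
    have hcont2 : Continuous (fun t => -(lam * (μ:ℂ)) * w t) :=
      continuous_const.mul hw.continuous
    have hclos : Ici (0:ℝ) ⊆ closure (Ioi (0:ℝ)) := by rw [closure_Ioi]
    intro t ht
    exact Set.EqOn.closure (fun x hx => hodeIoi x hx) hcont1 hcont2 (hclos ht)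
  -- boundary conditions
  have hbcw1 : deriv w 0 = 0 := by
    have := congrFun (hcomb 1) 0
    simp only [iteratedDeriv_one] at this
    rw [hwdef] at *
    rw [this, hbc₁, hbc₂]
    ring
  have hbcw3 : iteratedDeriv 3 w 0 = 0 := by
    have := congrFun (hcomb 3) 0
    rw [hwdef] at *
    rw [this, hbc₃, hbc₄]
    ring
  -- decay
  have hlw : Tendsto w atTop (nhds 0) := by
    have := (hl₁.const_mul k₁).add (hl₂.const_mul k₂)
    simpa using this
  -- roots
  obtain ⟨r₁, r₂, h1, h2, hne, hsum, hr₁0, hprod⟩ := LS_roots hre hlam hμ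
  have hode' : ∀ t ∈ Ici (0:ℝ), iteratedDeriv 4 w t = -(r₁ ^ 2 * r₂ ^ 2) * w t := by
    intro t ht
    rw [hprod]
    exact hodeIci t ht
  have := LS_scalar h1 h2 hne hsum hr₁0 hw hode' hbcw1 hbcw3 hlw
  intro t ht
  have h5 := this t ht
  rw [hwdef] at h5
  exact h5


/-- The Lopatinskii–Shapiro condition verified in the proof of Proposition 4.3 of the
paper: the only exponentially decaying solution of the fourth-order boundary value
problem on the half-line is the zero solution. -/
theorem lopatinskii_shapiro_system
    (lam : ℂ) (hre : 0 ≤ lam.re) (hlam : lam ≠ 0)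
    (a11 a12 a21 a22 : ℝ) (ha12 : a12 ≠ 0)
    (Ep Em : ℝ) (hEp : Ep < 0) (hEm : Em < 0) (hEpm : Ep ≠ Em)
    (hrootp : Ep ^ 2 + (a11 + a22) * Ep + (a11 * a22 - a12 * a21) = 0)
    (hrootm : Em ^ 2 + (a11 + a22) * Em + (a11 * a22 - a12 * a21) = 0)
    (u₁ u₂ : ℝ → ℂ) (hu₁ : ContDiff ℝ (⊤ : ℕ∞) u₁) (hu₂ : ContDiff ℝ (⊤ : ℕ∞) u₂)
    (hode₁ : ∀ t : ℝ, 0 < t →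
      lam * (a11 : ℂ) * u₁ t + lam * (a12 : ℂ) * u₂ t + iteratedDeriv 4 u₁ t = 0)
    (hode₂ : ∀ t : ℝ, 0 < t →
      lam * (a21 : ℂ) * u₁ t + lam * (a22 : ℂ) * u₂ t + iteratedDeriv 4 u₂ t = 0)
    (hbc₁ : deriv u₁ 0 = 0) (hbc₂ : deriv u₂ 0 = 0)
    (hbc₃ : iteratedDeriv 3 u₁ 0 = 0) (hbc₄ : iteratedDeriv 3 u₂ 0 = 0)
    (hdecay : ∃ C : ℝ, 0 < C ∧ ∃ ω : ℝ, 0 < ω ∧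
      ∀ t : ℝ, 0 ≤ t → ‖u₁ t‖ + ‖u₂ t‖ ≤ C * Real.exp (-ω * t)) :
    ∀ t : ℝ, 0 ≤ t → u₁ t = 0 ∧ u₂ t = 0 := by
  obtain ⟨C, hC, ω, hω, hbound⟩ := hdecay
  -- decay of each component
  have hgl : Tendsto (fun t : ℝ => C * Real.exp (-ω * t)) atTop (nhds 0) := by
    have h1 : Tendsto (fun t : ℝ => Real.exp (-ω * t)) atTop (nhds 0) :=
      Real.tendsto_exp_atBot.comp
        ((tendsto_id (α := ℝ)).const_mul_atTop_of_neg (by linarith))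
    simpa using h1.const_mul C
  have hl₁ : Tendsto u₁ atTop (nhds 0) := by
    apply squeeze_zero_norm' _ hgl
    filter_upwards [eventually_ge_atTop (0:ℝ)] with t ht
    have := hbound t ht
    have hn : (0:ℝ) ≤ ‖u₂ t‖ := norm_nonneg _
    linarith
  have hl₂ : Tendsto u₂ atTop (nhds 0) := by
    apply squeeze_zero_norm' _ hgl
    filter_upwards [eventually_ge_atTop (0:ℝ)] with t ht
    have := hbound t ht
    have hn : (0:ℝ) ≤ ‖u₁ t‖ := norm_nonneg _
    linarith
  -- the two eigenvalues
  set μp : ℝ := -Ep with hμp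
  set μm : ℝ := -Em with hμm
  have hμppos : 0 < μp := by rw [hμp]; linarith
  have hμmpos : 0 < μm := by rw [hμm]; linarith
  have hμprt : μp ^ 2 - (a11 + a22) * μp + (a11 * a22 - a12 * a21) = 0 := by
    rw [hμp]; linear_combination hrootp
  have hμmrt : μm ^ 2 - (a11 + a22) * μm + (a11 * a22 - a12 * a21) = 0 := by
    rw [hμm]; linear_combination hrootm
  have hp := LS_combo_zero lam hre hlam a11 a12 a21 a22 hμppos hμprt u₁ u₂ hu₁ hu₂
    hode₁ hode₂ hbc₁ hbc₂ hbc₃ hbc₄ hl₁ hl₂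
  have hm := LS_combo_zero lam hre hlam a11 a12 a21 a22 hμmpos hμmrt u₁ u₂ hu₁ hu₂
    hode₁ hode₂ hbc₁ hbc₂ hbc₃ hbc₄ hl₁ hl₂
  intro t ht
  have hpt := hp t ht
  have hmt := hm t ht
  have hdiffC : ((μp : ℂ) - μm) ≠ 0 := by
    intro h
    have : (μp : ℂ) = μm := by linear_combination h
    have : μp = μm := by exact_mod_cast this
    apply hEpm
    rw [hμp, hμm] at this
    linarith
  have hu₁t : u₁ t = 0 := by
    have h5 : ((μp : ℂ) - μm) * u₁ t = 0 := by
      push_cast at hpt hmt ⊢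
      linear_combination hpt - hmt
    rcases mul_eq_zero.mp h5 with h6 | h6
    · exact absurd h6 hdiffC
    · exact h6
  have hu₂t : u₂ t = 0 := by
    have ha12C : ((a12 : ℝ) : ℂ) ≠ 0 := by exact_mod_cast ha12
    have h5 : ((a12 : ℝ) : ℂ) * u₂ t = 0 := by
      rw [hu₁t] at hpt
      simpa using hpt
    rcases mul_eq_zero.mp h5 with h6 | h6
    · exact absurd h6 ha12C
    · exact h6
  exact ⟨hu₁t, hu₂t⟩
end

section
/- Let λ ∈ ℂ with Re λ ≥ 0 and λ ≠ 0, and let b, c ∈ ℝ be such that the quadratic polynomial E² + bE + c has two distinct real roots E₊, E₋ with E₊ < 0 and E₋ < 0. Suppose u : [0,∞) → ℂ is smooth, satisfies the eighth-order ordinary differential equation u⁽⁸⁾(t) + λ b u⁽⁴⁾(t) + λ² c u(t) = 0 for t > 0 together with u′(0) = u‴(0) = u⁽⁵⁾(0) = u⁽⁷⁾(0) = 0, and is exponentially decaying, i.e. there exist C, ω > 0 with |u(t)| ≤ C e^{−ωt} for all t ≥ 0. Then u ≡ 0. -/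
open Complex Filter Topology Set intervalIntegral Matrix


section Aux


/-- Cesàro: if F is continuous and tends to 0 at infinity, its averages tend to 0. -/
lemma cesaro_integral {F : ℝ → ℂ} (hF : Continuous F) (h0 : Tendsto F atTop (𝓝 0)) :
    Tendsto (fun T : ℝ => (∫ t in (0:ℝ)..T, F t) / T) atTop (𝓝 0) := by
  rw [NormedAddCommGroup.tendsto_nhds_zero]
  intro ε hε
  have h0' := NormedAddCommGroup.tendsto_nhds_zero.mp h0 (ε/4) (by positivity)
  rw [eventually_atTop] at h0' ⊢
  obtain ⟨T₁, hT₁⟩ := h0'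
  set T₀ : ℝ := max T₁ 0 with hT₀def
  have hT₀0 : 0 ≤ T₀ := le_max_right _ _
  have hT₀ : ∀ x ≥ T₀, ‖F x‖ ≤ ε/4 := fun x hx => (hT₁ x (le_trans (le_max_left _ _) hx)).le
  set C₀ : ℝ := ‖∫ t in (0:ℝ)..T₀, F t‖ with hC₀def
  refine ⟨max (max T₀ 1) (4 * C₀ / ε), fun T hT => lt_of_le_of_lt ?_ (show ε/2 < ε by linarith)⟩
  have hT₀T : T₀ ≤ T := le_trans (le_trans (le_max_left _ _) (le_max_left _ _)) hT
  have hT1 : (1:ℝ) ≤ T := le_trans (le_trans (le_max_right _ _) (le_max_left _ _)) hT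
  have hTC : 4 * C₀ / ε ≤ T := le_trans (le_max_right _ _) hT
  have hTpos : (0:ℝ) < T := lt_of_lt_of_le one_pos hT1
  have hsplit : (∫ t in (0:ℝ)..T, F t) = (∫ t in (0:ℝ)..T₀, F t) + ∫ t in T₀..T, F t := by
    rw [integral_add_adjacent_intervals] <;> exact (hF.intervalIntegrable _ _)
  have htail : ‖∫ t in T₀..T, F t‖ ≤ (ε/4) * |T - T₀| := by
    apply intervalIntegral.norm_integral_le_of_norm_le_const
    intro x hx
    rw [Set.uIoc_of_le hT₀T] at hx
    exact hT₀ x hx.1.le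
  have hbound : ‖∫ t in (0:ℝ)..T, F t‖ ≤ C₀ + (ε/4) * T := by
    rw [hsplit]
    refine le_trans (norm_add_le _ _) (add_le_add le_rfl (le_trans htail ?_))
    rw [_root_.abs_of_nonneg (by linarith)]
    nlinarith
  have hC₀T : C₀ ≤ ε/4 * T := by
    rcases le_or_gt C₀ 0 with h | h
    · nlinarith
    · rw [div_le_iff₀ hε] at hTC; nlinarith
  have : ‖(∫ t in (0:ℝ)..T, F t) / T‖ = ‖∫ t in (0:ℝ)..T, F t‖ / T := by
    rw [norm_div, Complex.norm_real, Real.norm_eq_abs, _root_.abs_of_pos hTpos]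
  rw [this, div_le_iff₀ hTpos]
  nlinarith

lemma const_div_tendsto (C : ℝ) : Tendsto (fun T : ℝ => C / T) atTop (𝓝 0) :=
  Tendsto.div_atTop tendsto_const_nhds tendsto_id

lemma avg_exp_zero {ν : ℂ} (hν : ν ≠ 0) (hre : ν.re ≤ 0) :
    Tendsto (fun T : ℝ => (∫ t in (0:ℝ)..T, Complex.exp (ν * t)) / (T:ℂ)) atTop (𝓝 0) := by
  have key : ∀ T : ℝ, (∫ t in (0:ℝ)..T, Complex.exp (ν * t)) = (Complex.exp (ν * T) - 1) / ν := by
    intro T; rw [integral_exp_mul_complex hν]; simp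
  apply squeeze_zero_norm' (a := fun T : ℝ => (2 / ‖ν‖) / T)
  · filter_upwards [eventually_gt_atTop (0:ℝ)] with T hT
    rw [key, norm_div, norm_div, Complex.norm_real, Real.norm_eq_abs, _root_.abs_of_pos hT]
    have h2 : ‖Complex.exp (ν * T) - 1‖ ≤ 2 := by
      calc ‖Complex.exp (ν * T) - 1‖ ≤ ‖Complex.exp (ν * T)‖ + 1 := by
            simpa using norm_sub_le (Complex.exp (ν * T)) 1
        _ ≤ 2 := by
            rw [Complex.norm_exp]
            have hle : (ν * T).re ≤ 0 := by
              rw [Complex.mul_re]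
              simp only [Complex.ofReal_re, Complex.ofReal_im, mul_zero, sub_zero]
              exact mul_nonpos_of_nonpos_of_nonneg hre hT.le
            have := Real.exp_le_one_iff.mpr hle
            linarith
    gcongr
  · exact const_div_tendsto _

lemma cont_exp_mul (μ : ℂ) : Continuous fun t : ℝ => Complex.exp (μ * t) :=
  Complex.continuous_exp.comp (continuous_const.mul Complex.continuous_ofReal)

lemma exp_sum_vanish {ι : Type*} [DecidableEq ι] (s : Finset ι) :
    ∀ (μ d : ι → ℂ), Set.InjOn μ s → (∀ k ∈ s, 0 ≤ (μ k).re) →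
    Tendsto (fun t : ℝ => ∑ k ∈ s, d k * Complex.exp (μ k * t)) atTop (𝓝 0) →
    ∀ k ∈ s, d k = 0 := by
  induction s using Finset.strongInduction with
  | _ s ih =>
    intro μ d hinj hre hlim k hk
    have hne : s.Nonempty := ⟨k, hk⟩
    set m := s.sup' hne (fun j => (μ j).re) with hm
    have hm0 : 0 ≤ m := by
      obtain ⟨j, hj, hjm⟩ := s.exists_mem_eq_sup' hne (fun j => (μ j).re)
      rw [hm, hjm]; exact hre j hj
    have hmax : ∀ j ∈ s, (μ j).re ≤ m := fun j hj => Finset.le_sup' (fun i => (μ i).re) hj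
    set S := s.filter (fun j => (μ j).re = m) with hS
    have hSsub : S ⊆ s := Finset.filter_subset _ _
    -- key claim
    have hkey : ∀ j ∈ S, d j = 0 := by
      intro j hjS
      obtain ⟨hjs, hjm⟩ := Finset.mem_filter.1 hjS
      set F : ℝ → ℂ := fun t => ∑ k ∈ s, d k * Complex.exp (μ k * t) with hF
      have hFcont : Continuous F := by
        apply continuous_finset_sum
        intro i _
        exact continuous_const.mul (cont_exp_mul _)
      have hH0 : Tendsto (fun t : ℝ => F t * Complex.exp (-μ j * t)) atTop (𝓝 0) := by
        apply squeeze_zero_norm' (a := fun t => ‖F t‖)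
        · filter_upwards [eventually_ge_atTop (0:ℝ)] with t ht
          rw [norm_mul]
          have : ‖Complex.exp (-μ j * t)‖ ≤ 1 := by
            rw [Complex.norm_exp, Real.exp_le_one_iff]
            rw [Complex.mul_re]
            simp only [Complex.ofReal_re, Complex.ofReal_im, mul_zero, sub_zero, Complex.neg_re]
            rw [hjm]
            exact mul_nonpos_of_nonpos_of_nonneg (by linarith) ht
          calc ‖F t‖ * ‖Complex.exp (-μ j * t)‖ ≤ ‖F t‖ * 1 := by
                exact mul_le_mul_of_nonneg_left this (norm_nonneg _)
            _ = ‖F t‖ := mul_one _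
        · exact tendsto_norm_zero.comp hlim
      have hG0 : Tendsto (fun T : ℝ =>
          (∫ t in (0:ℝ)..T, F t * Complex.exp (-μ j * t)) / (T:ℂ)) atTop (𝓝 0) :=
        cesaro_integral (hFcont.mul (cont_exp_mul _)) hH0
      -- rewrite integrand as sum of exponentials
      have hint : ∀ T : ℝ, (∫ t in (0:ℝ)..T, F t * Complex.exp (-μ j * t))
          = ∑ k ∈ s, d k * ∫ t in (0:ℝ)..T, Complex.exp ((μ k - μ j) * t) := by
        intro T
        have : ∀ t : ℝ, F t * Complex.exp (-μ j * t)
            = ∑ k ∈ s, d k * Complex.exp ((μ k - μ j) * t) := by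
          intro t
          rw [hF, Finset.sum_mul]
          congr 1; funext i
          rw [mul_assoc, ← Complex.exp_add]
          ring_nf
        simp_rw [this]
        rw [intervalIntegral.integral_finset_sum]
        · congr 1; funext i
          exact intervalIntegral.integral_const_mul _ _
        · intro i _
          exact (continuous_const.mul (cont_exp_mul _)).intervalIntegrable _ _
      -- limit of each term
      have hGlim : Tendsto (fun T : ℝ =>
          (∫ t in (0:ℝ)..T, F t * Complex.exp (-μ j * t)) / (T:ℂ)) atTop (𝓝 (d j)) := by
        have heq : ∀ᶠ T in atTop, d j + ∑ k ∈ s.erase j,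
              d k * ((∫ t in (0:ℝ)..T, Complex.exp ((μ k - μ j) * t)) / (T:ℂ))
            = (∫ t in (0:ℝ)..T, F t * Complex.exp (-μ j * t)) / (T:ℂ) := by
          filter_upwards [eventually_gt_atTop (0:ℝ)] with T hT
          have hTne : (T:ℂ) ≠ 0 := by exact_mod_cast hT.ne'
          rw [hint, Finset.sum_div, ← Finset.add_sum_erase _ _ hjs]
          congr 1
          · rw [sub_self, mul_div_assoc]
            simp [hTne]
          · congr 1; funext i; rw [mul_div_assoc]
        have hsum0 : Tendsto (fun T : ℝ => ∑ k ∈ s.erase j,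
            d k * ((∫ t in (0:ℝ)..T, Complex.exp ((μ k - μ j) * t)) / (T:ℂ))) atTop (𝓝 0) := by
          have : Tendsto (fun T : ℝ => ∑ k ∈ s.erase j,
              d k * ((∫ t in (0:ℝ)..T, Complex.exp ((μ k - μ j) * t)) / (T:ℂ))) atTop
              (𝓝 (∑ k ∈ s.erase j, d k * 0)) := by
            apply tendsto_finset_sum
            intro i hi
            obtain ⟨hine, his⟩ := Finset.mem_erase.1 hi
            have hν : μ i - μ j ≠ 0 := sub_ne_zero.2 (fun h => hine (hinj his hjs h))
            have hνre : (μ i - μ j).re ≤ 0 := by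
              rw [Complex.sub_re]
              have := hmax i his
              rw [hjm] at *
              linarith
            exact (avg_exp_zero hν hνre).const_mul _
          simpa using this
        have : Tendsto (fun T : ℝ => d j + ∑ k ∈ s.erase j,
            d k * ((∫ t in (0:ℝ)..T, Complex.exp ((μ k - μ j) * t)) / (T:ℂ))) atTop (𝓝 (d j)) := by
          simpa using tendsto_const_nhds.add hsum0
        exact this.congr' heq
      exact tendsto_nhds_unique hGlim hG0
    by_cases hkS : k ∈ S
    · exact hkey k hkS
    · have hSne : S.Nonempty := by
        obtain ⟨j, hj, hjm⟩ := s.exists_mem_eq_sup' hne (fun j => (μ j).re)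
        exact ⟨j, Finset.mem_filter.2 ⟨hj, hjm.symm⟩⟩
      have hss : s \ S ⊂ s := by
        apply Finset.sdiff_ssubset hSsub hSne
      have hsum : ∀ t : ℝ, ∑ k ∈ s \ S, d k * Complex.exp (μ k * t)
          = ∑ k ∈ s, d k * Complex.exp (μ k * t) := by
        intro t
        rw [← Finset.sum_sdiff hSsub]
        have : ∑ k ∈ S, d k * Complex.exp (μ k * t) = 0 := by
          apply Finset.sum_eq_zero
          intro i hi
          rw [hkey i hi, zero_mul]
        rw [this, add_zero]
      apply ih (s \ S) hss μ d (hinj.mono (by rw [Finset.coe_sdiff]; exact Set.diff_subset))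
        (fun i hi => hre i (Finset.mem_sdiff.1 hi).1) ?_ k (Finset.mem_sdiff.2 ⟨hk, hkS⟩)
      exact hlim.congr (fun t => (hsum t).symm)

lemma vandermonde_det_ne {n : ℕ} (μ : Fin n → ℂ) (hμ : Function.Injective μ) :
    ((Matrix.vandermonde μ)ᵀ).det ≠ 0 := by
  rw [Matrix.det_transpose, Matrix.det_vandermonde]
  apply Finset.prod_ne_zero_iff.2
  intro i _
  apply Finset.prod_ne_zero_iff.2
  intro j hj
  rw [Finset.mem_Ioi] at hj
  exact sub_ne_zero.2 fun h => (hj.ne (hμ h.symm))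

lemma vandermonde_system {n : ℕ} (μ : Fin n → ℂ) (hμ : Function.Injective μ)
    (w : Fin n → ℂ) :
    ∃ c : Fin n → ℂ, ∀ j : Fin n, ∑ k, c k * μ k ^ (j : ℕ) = w j := by
  set M := (Matrix.vandermonde μ)ᵀ with hM
  have hdet := vandermonde_det_ne μ hμ
  refine ⟨M⁻¹.mulVec w, fun j => ?_⟩
  have : M.mulVec (M⁻¹.mulVec w) = w := by
    rw [Matrix.mulVec_mulVec, Matrix.mul_nonsing_inv _ (isUnit_iff_ne_zero.2 hdet), Matrix.one_mulVec]
  have hj := congrFun this j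
  rw [Matrix.mulVec, dotProduct] at hj
  simp only [hM, Matrix.transpose_apply, Matrix.vandermonde] at hj
  rw [← hj]
  congr 1; funext i; rw [mul_comm]; rfl

lemma vandermonde_zero {n : ℕ} (μ : Fin n → ℂ) (hμ : Function.Injective μ)
    (e : Fin n → ℂ) (h : ∀ j : Fin n, ∑ k, e k * μ k ^ (j : ℕ) = 0) : ∀ k, e k = 0 := by
  set M := (Matrix.vandermonde μ)ᵀ with hM
  have hdet := vandermonde_det_ne μ hμ
  have hmv : M.mulVec e = 0 := by
    funext j
    rw [Matrix.mulVec, dotProduct]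
    simp only [hM, Matrix.transpose_apply, Matrix.vandermonde]
    rw [Pi.zero_apply, ← h j]
    congr 1; funext i; rw [mul_comm]; rfl
  have : e = 0 := by
    have h3 : (M⁻¹ * M).mulVec e = M⁻¹.mulVec 0 := by
      rw [← Matrix.mulVec_mulVec, hmv]
    rwa [Matrix.nonsing_inv_mul _ (isUnit_iff_ne_zero.2 hdet), Matrix.one_mulVec,
      Matrix.mulVec_zero] at h3
  exact fun k => congrFun this k

lemma I_pow_inj : ∀ a b : ℕ, a < 4 → b < 4 → Complex.I ^ a = Complex.I ^ b → a = b := by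
  intro a b ha hb h
  interval_cases a <;> interval_cases b <;>
    simp_all [pow_succ, Complex.ext_iff] <;> norm_num at h

lemma roots_inj {x y : ℂ} (hx : x ≠ 0) (hy : y ≠ 0) (hxy : x ^ 4 ≠ y ^ 4) :
    Function.Injective (fun k : Fin 8 =>
    Complex.I ^ ((k : ℕ) % 4) * (if (k : ℕ) < 4 then x else y)) := by
  intro j k h
  simp only at h
  have hI4 : ∀ a : ℕ, (Complex.I ^ (a % 4)) ^ 4 = 1 := by
    intro a
    rw [← pow_mul, mul_comm, pow_mul, Complex.I_pow_four, one_pow]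
  by_cases hj : (j : ℕ) < 4 <;> by_cases hk : (k : ℕ) < 4
  · rw [if_pos hj, if_pos hk] at h
    have := I_pow_inj _ _ (Nat.mod_lt _ (by norm_num)) (Nat.mod_lt _ (by norm_num))
      (mul_right_cancel₀ hx h)
    exact Fin.ext (by omega)
  · rw [if_pos hj, if_neg hk] at h
    have h4 := congrArg (· ^ 4) h
    simp only [mul_pow, hI4, one_mul] at h4
    exact absurd h4 hxy
  · rw [if_neg hj, if_pos hk] at h
    have h4 := congrArg (· ^ 4) h
    simp only [mul_pow, hI4, one_mul] at h4
    exact absurd h4.symm hxy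
  · rw [if_neg hj, if_neg hk] at h
    have := I_pow_inj _ _ (Nat.mod_lt _ (by norm_num)) (Nat.mod_lt _ (by norm_num))
      (mul_right_cancel₀ hy h)
    exact Fin.ext (by omega)

lemma roots_pow_four {x y : ℂ} (k : Fin 8) :
    (Complex.I ^ ((k : ℕ) % 4) * (if (k : ℕ) < 4 then x else y)) ^ 4
      = if (k : ℕ) < 4 then x ^ 4 else y ^ 4 := by
  have hI4 : (Complex.I ^ ((k : ℕ) % 4)) ^ 4 = 1 := by
    rw [← pow_mul, mul_comm, pow_mul, Complex.I_pow_four, one_pow]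
  by_cases hk : (k : ℕ) < 4 <;> simp [hk, mul_pow, hI4]

lemma hasDerivAt_exp_mul (μ : ℂ) (t : ℝ) :
    HasDerivAt (fun s : ℝ => Complex.exp (μ * s)) (μ * Complex.exp (μ * t)) t := by
  have h1 : HasDerivAt (fun s : ℝ => (μ * s : ℂ)) μ t := by
    simpa using ((hasDerivAt_id (t : ℂ)).const_mul μ).comp_ofReal
  rw [mul_comm μ (Complex.exp _)]; exact (Complex.hasDerivAt_exp (μ * (t:ℂ))).comp t h1

lemma ode_representation (lam b c : ℂ) (μ : Fin 8 → ℂ)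
    (hμroot : ∀ k, μ k ^ 8 + lam * b * μ k ^ 4 + lam ^ 2 * c = 0)
    (hμinj : Function.Injective μ)
    (u : ℝ → ℂ) (hu : ContDiff ℝ (⊤ : ℕ∞) u)
    (hode : ∀ t : ℝ, 0 ≤ t →
      iteratedDeriv 8 u t + lam * b * iteratedDeriv 4 u t + lam ^ 2 * c * u t = 0) :
    ∃ co : Fin 8 → ℂ, (∀ j : Fin 8, ∑ k, co k * μ k ^ (j : ℕ) = iteratedDeriv (j : ℕ) u 0) ∧
      ∀ t : ℝ, 0 ≤ t → u t = ∑ k, co k * Complex.exp (μ k * t) := by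
  obtain ⟨co, hco⟩ := vandermonde_system μ hμinj (fun j => iteratedDeriv (j : ℕ) u 0)
  refine ⟨co, hco, ?_⟩
  -- the first order system
  set v : ℝ → (Fin 8 → ℂ) → (Fin 8 → ℂ) := fun _ x i =>
    if h : (i : ℕ) + 1 < 8 then x ⟨(i : ℕ) + 1, h⟩
    else -(lam * b) * x 4 - lam ^ 2 * c * x 0 with hv
  set K : NNReal := 1 + ‖lam * b‖₊ + ‖lam ^ 2 * c‖₊ with hK
  have hlip : ∀ t : ℝ, LipschitzWith K (v t) := by
    intro t
    apply LipschitzWith.of_dist_le_mul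
    intro x y
    rw [dist_pi_le_iff (by positivity)]
    intro i
    by_cases h : (i : ℕ) + 1 < 8
    · simp only [hv, dif_pos h]
      calc dist (x ⟨(i:ℕ)+1, h⟩) (y ⟨(i:ℕ)+1, h⟩) ≤ dist x y := dist_le_pi_dist x y _
        _ ≤ K * dist x y := by
            have h1 : (1:ℝ) ≤ (K:ℝ) := by
              rw [hK]; push_cast
              linarith [norm_nonneg (lam * b), norm_nonneg (lam ^ 2 * c)]
            nlinarith [dist_nonneg (x := x) (y := y)]
    · simp only [hv, dif_neg h]
      rw [dist_eq_norm]
      have : -(lam * b) * x 4 - lam ^ 2 * c * x 0 - (-(lam * b) * y 4 - lam ^ 2 * c * y 0)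
          = -(lam * b) * (x 4 - y 4) - lam ^ 2 * c * (x 0 - y 0) := by ring
      rw [this]
      calc ‖-(lam * b) * (x 4 - y 4) - lam ^ 2 * c * (x 0 - y 0)‖
          ≤ ‖-(lam * b) * (x 4 - y 4)‖ + ‖lam ^ 2 * c * (x 0 - y 0)‖ := norm_sub_le _ _
        _ = ‖lam * b‖ * ‖x 4 - y 4‖ + ‖lam ^ 2 * c‖ * ‖x 0 - y 0‖ := by
            rw [norm_mul, norm_mul, norm_neg]
        _ ≤ ‖lam * b‖ * dist x y + ‖lam ^ 2 * c‖ * dist x y := by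
            have h4 := dist_le_pi_dist x y 4
            have h0 := dist_le_pi_dist x y 0
            rw [dist_eq_norm] at h4 h0
            exact add_le_add (mul_le_mul_of_nonneg_left h4 (norm_nonneg _))
              (mul_le_mul_of_nonneg_left h0 (norm_nonneg _))
        _ ≤ K * dist x y := by
            have : (K:ℝ) = 1 + ‖lam * b‖ + ‖lam ^ 2 * c‖ := by rw [hK]; push_cast; simp
            rw [this]
            nlinarith [dist_nonneg (x := x) (y := y)]
  -- the vector solutions
  set U : ℝ → Fin 8 → ℂ := fun t i => iteratedDeriv (i : ℕ) u t with hU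
  set g : ℝ → Fin 8 → ℂ := fun t i => ∑ k, co k * μ k ^ (i : ℕ) * Complex.exp (μ k * t) with hg
  have hUderiv : ∀ t : ℝ, 0 ≤ t → HasDerivAt U (v t (U t)) t := by
    intro t ht
    rw [hasDerivAt_pi]
    intro i
    have hD : ∀ n : ℕ, HasDerivAt (iteratedDeriv n u) (iteratedDeriv (n+1) u t) t := by
      intro n
      rw [iteratedDeriv_succ]
      exact ((hu.differentiable_iteratedDeriv n (by exact_mod_cast lt_top_iff_ne_top.2 (by simp))) t).hasDerivAt
    by_cases h : (i : ℕ) + 1 < 8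
    · have : v t (U t) i = iteratedDeriv ((i : ℕ) + 1) u t := by
        simp only [hv, hU, dif_pos h]
      rw [this]
      exact hD (i : ℕ)
    · have hi7 : (i : ℕ) = 7 := by omega
      have : v t (U t) i = -(lam * b) * iteratedDeriv 4 u t - lam ^ 2 * c * u t := by
        simp only [hv, hU, dif_neg h]
        rfl
      rw [this]
      have h8 : iteratedDeriv 8 u t = -(lam * b) * iteratedDeriv 4 u t - lam ^ 2 * c * u t := by
        linear_combination hode t ht
      have := hD 7
      rw [h8] at this
      rw [show i = (7 : Fin 8) by exact Fin.ext hi7]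
      exact this
  have hgderiv : ∀ t : ℝ, HasDerivAt g (v t (g t)) t := by
    intro t
    rw [hasDerivAt_pi]
    intro i
    have hterm : HasDerivAt (fun s : ℝ => ∑ k, co k * μ k ^ (i : ℕ) * Complex.exp (μ k * s))
        (∑ k, co k * μ k ^ ((i : ℕ) + 1) * Complex.exp (μ k * t)) t := by
      have := HasDerivAt.fun_sum (fun k (_ : k ∈ Finset.univ) =>
        ((hasDerivAt_exp_mul (μ k) t).const_mul (co k * μ k ^ (i : ℕ))))
      refine this.congr_deriv ?_
      apply Finset.sum_congr rfl
      intro k _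
      rw [pow_succ]
      ring
    by_cases h : (i : ℕ) + 1 < 8
    · have : v t (g t) i = ∑ k, co k * μ k ^ ((i : ℕ) + 1) * Complex.exp (μ k * t) := by
        simp only [hv, hg, dif_pos h]
      rw [this]
      exact hterm
    · have hi7 : (i : ℕ) = 7 := by omega
      have hval : v t (g t) i = ∑ k, co k * μ k ^ 8 * Complex.exp (μ k * t) := by
        simp only [hv, hg, dif_neg h]
        rw [Finset.mul_sum, Finset.mul_sum, ← Finset.sum_sub_distrib]
        apply Finset.sum_congr rfl
        intro k _
        have hroot : μ k ^ 8 = -(lam * b) * μ k ^ 4 - lam ^ 2 * c := by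
          linear_combination hμroot k
        have h4 : ((4 : Fin 8) : ℕ) = 4 := rfl
        have h0 : ((0 : Fin 8) : ℕ) = 0 := rfl
        rw [hroot, h4, h0]
        ring
      have h18 : ((i : ℕ) + 1) = 8 := by omega
      rw [h18] at hterm
      rw [hval]
      exact hterm
  have hinit : U 0 = g 0 := by
    funext i
    simp only [hU, hg, Complex.ofReal_zero, mul_zero, Complex.exp_zero, mul_one]
    exact (hco i).symm
  have hUcont : Continuous U := by
    apply continuous_pi
    intro i
    exact hu.continuous_iteratedDeriv (i : ℕ) (by exact_mod_cast le_top)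
  intro t ht
  have hEq : U t = g t := by
    rcases eq_or_lt_of_le ht with rfl | ht'
    · exact hinit
    · have := ODE_solution_unique (a := (0:ℝ)) (b := t) hlip (hUcont.continuousOn)
        (fun s hs => (hUderiv s hs.1).hasDerivWithinAt)
        (Continuous.continuousOn (by
          apply continuous_pi
          intro i
          apply continuous_finset_sum
          intro k _
          exact (continuous_const.mul (Complex.continuous_exp.comp
            (continuous_const.mul Complex.continuous_ofReal)))))
        (fun s _ => (hgderiv s).hasDerivWithinAt) hinit
      exact this (show t ∈ Set.Icc 0 t from ⟨ht, le_refl t⟩)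
  have h0 := congrFun hEq (0 : Fin 8)
  have hz : ((0 : Fin 8) : ℕ) = 0 := rfl
  simp only [hU, hg, hz, iteratedDeriv_zero, pow_zero, mul_one] at h0
  exact h0

end Aux


/-- The scalar eighth-order reduction used in the verification of the
Lopatinskii–Shapiro condition in Proposition 4.3 of the paper: the only exponentially
decaying solution of `u⁽⁸⁾ + λ b u⁽⁴⁾ + λ² c u = 0` on the half-line with
`u′(0) = u‴(0) = u⁽⁵⁾(0) = u⁽⁷⁾(0) = 0` is the zero solution. -/
theorem lopatinskii_shapiro_scalar
    (lam : ℂ) (hre : 0 ≤ lam.re) (hlam : lam ≠ 0)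
    (b c : ℝ)
    (Ep Em : ℝ) (hEp : Ep < 0) (hEm : Em < 0) (hEpm : Ep ≠ Em)
    (hrootp : Ep ^ 2 + b * Ep + c = 0)
    (hrootm : Em ^ 2 + b * Em + c = 0)
    (u : ℝ → ℂ) (hu : ContDiff ℝ (⊤ : ℕ∞) u)
    (hode : ∀ t : ℝ, 0 < t →
      iteratedDeriv 8 u t + lam * (b : ℂ) * iteratedDeriv 4 u t
        + lam ^ 2 * (c : ℂ) * u t = 0)
    (hbc₁ : deriv u 0 = 0) (hbc₂ : iteratedDeriv 3 u 0 = 0)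
    (hbc₃ : iteratedDeriv 5 u 0 = 0) (hbc₄ : iteratedDeriv 7 u 0 = 0)
    (hdecay : ∃ C : ℝ, 0 < C ∧ ∃ ω : ℝ, 0 < ω ∧
      ∀ t : ℝ, 0 ≤ t → ‖u t‖ ≤ C * Real.exp (-ω * t)) :
    ∀ t : ℝ, 0 ≤ t → u t = 0 := by
  classical
  obtain ⟨C, hC, ω, hω, hdec⟩ := hdecay
  -- the ODE extends to t = 0 by continuity
  have hode' : ∀ t : ℝ, 0 ≤ t →
      iteratedDeriv 8 u t + lam * (b : ℂ) * iteratedDeriv 4 u t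
        + lam ^ 2 * (c : ℂ) * u t = 0 := by
    intro t ht
    rcases eq_or_lt_of_le ht with rfl | ht'
    · set h : ℝ → ℂ := fun s => iteratedDeriv 8 u s + lam * (b : ℂ) * iteratedDeriv 4 u s
        + lam ^ 2 * (c : ℂ) * u s with hh
      have hcont : Continuous h := by
        apply Continuous.add
        apply Continuous.add
        · exact hu.continuous_iteratedDeriv 8 (by exact WithTop.coe_le_coe.2 (le_top : (8 : ℕ∞) ≤ ⊤))
        · exact continuous_const.mul (hu.continuous_iteratedDeriv 4 (by exact WithTop.coe_le_coe.2 (le_top : (4 : ℕ∞) ≤ ⊤)))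
        · exact continuous_const.mul hu.continuous
      have h1 : Tendsto h (𝓝[>] (0:ℝ)) (𝓝 (h 0)) :=
        (hcont.continuousAt (x := (0:ℝ))).continuousWithinAt
      have h2 : Tendsto h (𝓝[>] (0:ℝ)) (𝓝 0) := by
        apply Tendsto.congr' _ tendsto_const_nhds
        filter_upwards [self_mem_nhdsWithin] with s hs
        exact (hode s hs).symm
      exact tendsto_nhds_unique h1 h2
    · exact hode t ht'
  -- roots of the characteristic polynomial
  have hEp0 : (Ep:ℂ) ≠ 0 := by exact_mod_cast hEp.ne
  have hEm0 : (Em:ℂ) ≠ 0 := by exact_mod_cast hEm.ne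
  have hzp : lam * (Ep:ℂ) ≠ 0 := mul_ne_zero hlam hEp0
  have hzm : lam * (Em:ℂ) ≠ 0 := mul_ne_zero hlam hEm0
  set x : ℂ := Complex.exp (Complex.log (lam * Ep) / 4) with hxdef
  set y : ℂ := Complex.exp (Complex.log (lam * Em) / 4) with hydef
  have hx4 : x ^ 4 = lam * Ep := by
    rw [hxdef, ← Complex.exp_nat_mul,
      show ((4:ℕ) : ℂ) * (Complex.log (lam * Ep) / 4) = Complex.log (lam * Ep) by
        push_cast; ring]
    exact Complex.exp_log hzp
  have hy4 : y ^ 4 = lam * Em := by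
    rw [hydef, ← Complex.exp_nat_mul,
      show ((4:ℕ) : ℂ) * (Complex.log (lam * Em) / 4) = Complex.log (lam * Em) by
        push_cast; ring]
    exact Complex.exp_log hzm
  have hx0 : x ≠ 0 := Complex.exp_ne_zero _
  have hy0 : y ≠ 0 := Complex.exp_ne_zero _
  have hxy : x ^ 4 ≠ y ^ 4 := by
    rw [hx4, hy4]
    intro h
    exact hEpm (by exact_mod_cast mul_left_cancel₀ hlam h)
  clear_value x y
  set μ : Fin 8 → ℂ := fun k => Complex.I ^ ((k : ℕ) % 4) * (if (k : ℕ) < 4 then x else y)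
    with hμdef
  have hμinj : Function.Injective μ := roots_inj hx0 hy0 hxy
  have hμ4 : ∀ k : Fin 8, μ k ^ 4 = if (k : ℕ) < 4 then x ^ 4 else y ^ 4 := fun k =>
    roots_pow_four k
  have hμroot : ∀ k, μ k ^ 8 + lam * (b:ℂ) * μ k ^ 4 + lam ^ 2 * (c:ℂ) = 0 := by
    intro k
    have h8 : μ k ^ 8 = (μ k ^ 4) ^ 2 := by rw [← pow_mul]
    rw [h8, hμ4 k]
    by_cases hk : (k : ℕ) < 4
    · rw [if_pos hk, hx4]
      have hE : (Ep:ℂ)^2 + (b:ℂ)*(Ep:ℂ) + (c:ℂ) = 0 := by exact_mod_cast hrootp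
      linear_combination lam ^ 2 * hE
    · rw [if_neg hk, hy4]
      have hE : (Em:ℂ)^2 + (b:ℂ)*(Em:ℂ) + (c:ℂ) = 0 := by exact_mod_cast hrootm
      linear_combination lam ^ 2 * hE
  obtain ⟨co, hco, hrep⟩ := ode_representation lam b c μ hμroot hμinj u hu hode'
  -- value lemmas
  have hv0 : μ 0 = x := by
    rw [hμdef]; simp only [show (((0:Fin 8)) : ℕ) = 0 from rfl]; norm_num
  have hv1 : μ 1 = Complex.I * x := by
    rw [hμdef]; simp only [show (((1:Fin 8)) : ℕ) = 1 from rfl]; norm_num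
  have hv2 : μ 2 = -x := by
    rw [hμdef]; simp only [show (((2:Fin 8)) : ℕ) = 2 from rfl]
    norm_num [pow_succ, Complex.I_mul_I]
  have hv3 : μ 3 = -(Complex.I * x) := by
    rw [hμdef]; simp only [show (((3:Fin 8)) : ℕ) = 3 from rfl]
    norm_num [pow_succ, Complex.I_mul_I]
  have hv4 : μ 4 = y := by
    rw [hμdef]; simp only [show (((4:Fin 8)) : ℕ) = 4 from rfl]; norm_num
  have hv5 : μ 5 = Complex.I * y := by
    rw [hμdef]; simp only [show (((5:Fin 8)) : ℕ) = 5 from rfl]; norm_num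
  have hv6 : μ 6 = -y := by
    rw [hμdef]; simp only [show (((6:Fin 8)) : ℕ) = 6 from rfl]
    norm_num [pow_succ, Complex.I_mul_I]
  have hv7 : μ 7 = -(Complex.I * y) := by
    rw [hμdef]; simp only [show (((7:Fin 8)) : ℕ) = 7 from rfl]
    norm_num [pow_succ, Complex.I_mul_I]
  clear_value μ
  -- decay: coefficients of non-decaying modes vanish
  have hvanish : ∀ k, 0 ≤ (μ k).re → co k = 0 := by
    have hFlim : Tendsto (fun t : ℝ => ∑ k, co k * Complex.exp (μ k * t)) atTop (𝓝 0) := by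
      apply squeeze_zero_norm' (a := fun t => C * Real.exp (-ω * t))
      · filter_upwards [eventually_ge_atTop (0:ℝ)] with t ht
        rw [← hrep t ht]
        exact hdec t ht
      · have h1 : Tendsto (fun t : ℝ => -ω * t) atTop atBot :=
          tendsto_id.const_mul_atTop_of_neg (by linarith)
        simpa using (Real.tendsto_exp_atBot.comp h1).const_mul C
    set s2 : Finset (Fin 8) := Finset.univ.filter (fun k => ¬ 0 ≤ (μ k).re) with hs2def
    set s1 : Finset (Fin 8) := Finset.univ.filter (fun k => 0 ≤ (μ k).re) with hs1def
    have hs2lim : Tendsto (fun t : ℝ => ∑ k ∈ s2, co k * Complex.exp (μ k * t)) atTop (𝓝 0) := by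
      have := tendsto_finset_sum s2 (f := fun (k : Fin 8) (t : ℝ) => co k * Complex.exp (μ k * t))
        (x := atTop) (a := fun _ => (0:ℂ)) ?_
      · simpa using this
      · intro i hi
        have hneg : (μ i).re < 0 := lt_of_not_ge (Finset.mem_filter.1 hi).2
        apply squeeze_zero_norm (a := fun t : ℝ => ‖co i‖ * Real.exp ((μ i).re * t))
        · intro t
          rw [norm_mul, Complex.norm_exp]
          have : (μ i * (t:ℂ)).re = (μ i).re * t := by
            rw [Complex.mul_re]
            simp
          rw [this]
        · have h1 : Tendsto (fun t : ℝ => (μ i).re * t) atTop atBot :=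
            tendsto_id.const_mul_atTop_of_neg hneg
          simpa using (Real.tendsto_exp_atBot.comp h1).const_mul ‖co i‖
    have hs1lim : Tendsto (fun t : ℝ => ∑ k ∈ s1, co k * Complex.exp (μ k * t)) atTop (𝓝 0) := by
      have heq : ∀ t : ℝ, ∑ k ∈ s1, co k * Complex.exp (μ k * t)
          = (∑ k, co k * Complex.exp (μ k * t)) - ∑ k ∈ s2, co k * Complex.exp (μ k * t) := by
        intro t
        rw [eq_sub_iff_add_eq, hs1def, hs2def]
        exact Finset.sum_filter_add_sum_filter_not _ _ _
      rw [show (0:ℂ) = 0 - 0 by ring]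
      exact Tendsto.congr (fun t => (heq t).symm) (hFlim.sub hs2lim)
    intro k hk
    exact exp_sum_vanish s1 μ co (hμinj.injOn)
      (fun j hj => (Finset.mem_filter.1 hj).2) hs1lim k
      (Finset.mem_filter.2 ⟨Finset.mem_univ _, hk⟩)
  -- boundary conditions at 0
  have eodd : ∀ n : ℕ, n < 4 → ∑ k, co k * μ k ^ (2*n+1) = 0 := by
    intro n hn
    interval_cases n
    · exact (hco 1).trans (by
        rw [show (((1:Fin 8)):ℕ) = 1 from rfl, iteratedDeriv_one]; exact hbc₁)
    · exact (hco 3).trans hbc₂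
    · exact (hco 5).trans hbc₃
    · exact (hco 7).trans hbc₄
  have hIx2 : (Complex.I * x) ^ 2 = -x^2 := by
    rw [mul_pow, Complex.I_sq]; ring
  have hIy2 : (Complex.I * y) ^ 2 = -y^2 := by
    rw [mul_pow, Complex.I_sq]; ring
  set σv : Fin 4 → ℂ := ![x^2, -x^2, y^2, -y^2] with hσv
  set ev : Fin 4 → ℂ := ![(co 0 - co 2) * x, (co 1 - co 3) * (Complex.I * x),
    (co 4 - co 6) * y, (co 5 - co 7) * (Complex.I * y)] with hev
  have hsys : ∀ n : ℕ, (∑ k, co k * μ k ^ (2*n+1) = 0) → ∑ i, ev i * σv i ^ n = 0 := by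
    intro n h
    rw [Fin.sum_univ_eight, hv0, hv1, hv2, hv3, hv4, hv5, hv6, hv7] at h
    have hodd : ∀ z : ℂ, (-z)^(2*n+1) = -(z^(2*n+1)) := fun z =>
      Odd.neg_pow (odd_two_mul_add_one n) z
    rw [hodd, hodd, hodd, hodd] at h
    have hpw : ∀ z : ℂ, z^(2*n+1) = (z^2)^n * z := by
      intro z; rw [pow_succ, pow_mul]
    rw [hpw x, hpw (Complex.I * x), hpw y, hpw (Complex.I * y), hIx2, hIy2] at h
    rw [Fin.sum_univ_four, hσv, hev]
    simp only [Matrix.cons_val_zero, Matrix.cons_val_one, Matrix.head_cons,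
      Matrix.cons_val_two, Matrix.tail_cons, Matrix.cons_val_three]
    linear_combination h
  have hA : (x^2 : ℂ) ≠ -x^2 := by
    intro h
    apply hx0
    have h2 : x^2 = 0 := by linear_combination h/2
    exact pow_eq_zero_iff (two_ne_zero) |>.1 h2
  have hB : (y^2 : ℂ) ≠ -y^2 := by
    intro h
    apply hy0
    have h2 : y^2 = 0 := by linear_combination h/2
    exact pow_eq_zero_iff (two_ne_zero) |>.1 h2
  have hC : (x^2 : ℂ) ≠ y^2 := by
    intro h
    apply hxy
    have := congrArg (· ^ 2) h
    rw [← pow_mul, ← pow_mul] at this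
    exact this
  have hD : (x^2 : ℂ) ≠ -y^2 := by
    intro h
    apply hxy
    have := congrArg (· ^ 2) h
    simp only [neg_sq] at this
    rw [← pow_mul, ← pow_mul] at this
    exact this
  have hE : (-x^2 : ℂ) ≠ y^2 := fun h => hD (by linear_combination -h)
  have hF : (-x^2 : ℂ) ≠ -y^2 := fun h => hC (neg_inj.1 h)
  have hσinj : Function.Injective σv := by
    intro a b' h
    rw [hσv] at h
    fin_cases a <;> fin_cases b' <;>
      simp only [Matrix.cons_val_zero, Matrix.cons_val_one, Matrix.head_cons,
        Matrix.cons_val_two, Matrix.tail_cons, Matrix.cons_val_three] at h <;>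
      first
        | rfl
        | exact absurd h hA | exact absurd h hA.symm
        | exact absurd h hB | exact absurd h hB.symm
        | exact absurd h hC | exact absurd h hC.symm
        | exact absurd h hD | exact absurd h hD.symm
        | exact absurd h hE | exact absurd h hE.symm
        | exact absurd h hF | exact absurd h hF.symm
  have hall : ∀ i, ev i = 0 :=
    vandermonde_zero σv hσinj ev (fun j => hsys (j : ℕ) (eodd (j : ℕ) j.isLt))
  -- extract pair equalities
  have hIx0 : Complex.I * x ≠ 0 := mul_ne_zero Complex.I_ne_zero hx0
  have hIy0 : Complex.I * y ≠ 0 := mul_ne_zero Complex.I_ne_zero hy0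
  have hsub : ∀ (a b' : ℂ) (z : ℂ), (a - b') * z = 0 → z ≠ 0 → a = b' := by
    intro a b' z h hz
    rcases mul_eq_zero.1 h with h' | h'
    · exact sub_eq_zero.1 h'
    · exact absurd h' hz
  have hc02 : co 0 = co 2 := hsub _ _ _ (by
    have := hall 0; rw [hev] at this; simpa using this) hx0
  have hc13 : co 1 = co 3 := hsub _ _ _ (by
    have := hall 1; rw [hev] at this; simpa using this) hIx0
  have hc46 : co 4 = co 6 := hsub _ _ _ (by
    have := hall 2; rw [hev] at this; simpa using this) hy0
  have hc57 : co 5 = co 7 := hsub _ _ _ (by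
    have := hall 3; rw [hev] at this; simpa using this) hIy0
  -- each pair has a member with nonnegative real part
  have pair0 : ∀ (i j : Fin 8), μ j = -μ i → co i = co j → co i = 0 ∧ co j = 0 := by
    intro i j hji hcij
    rcases le_or_gt 0 (μ i).re with h | h
    · have h0 : co i = 0 := hvanish i h
      exact ⟨h0, hcij ▸ h0⟩
    · have h0 : co j = 0 := hvanish j (by rw [hji, Complex.neg_re]; linarith)
      exact ⟨hcij.trans h0, h0⟩
  obtain ⟨hz0, hz2⟩ := pair0 0 2 (by rw [hv2, hv0]) hc02
  obtain ⟨hz1, hz3⟩ := pair0 1 3 (by rw [hv3, hv1]) hc13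
  obtain ⟨hz4, hz6⟩ := pair0 4 6 (by rw [hv6, hv4]) hc46
  obtain ⟨hz5, hz7⟩ := pair0 5 7 (by rw [hv7, hv5]) hc57
  -- conclusion
  intro t ht
  rw [hrep t ht]
  apply Finset.sum_eq_zero
  intro k _
  have hk0 : co k = 0 := by fin_cases k <;> assumption
  rw [hk0, zero_mul]
end
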